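/- arXiv:2412.15287 — 11 statements merged into one kernel-verified Lean document; each statement's English description precedes it below -/
import Mathlib

section
/- Let Y be a finite type, π a positive pmf on Y, r : Y → ℝ an injective verifier score, and N ≥ 1 an integer. Let Y₁,…,Y_N be independent samples from π and let Y* be the sample attaining the maximal score, i.e. Y* = Y_{i*} where r(Y_{i*}) = max_{1≤i≤N} r(Y_i) (this maximal value is attained by a unique element of Y since r is injective). Then for every y ∈ Y, P(Y* = y) = F(y)^N − (F(y) − π(y))^N, where F(y) = ∑_{y' : r(y') ≤ r(y)} π(y'). -/
/-!
Write `A = {y' | r y' ≤ r y}`. The tuples whose best sample is `y` are the tuples in `Aᴺ` that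
are not in `(A \ {y})ᴺ`, and the total weight of `Bᴺ` under the product measure is
`(π B)ᴺ` by expanding the power of a sum. Subtracting the two gives the formula.
-/

open scoped Classical

section

open Finset Fintype

variable {α R : Type*}

theorem filter_piFinset_const_exists_eq {n : ℕ} (A : Finset α) (a : α) :
    (piFinset fun _ : Fin n => A).filter (fun s => ∃ i, s i = a)
      = (piFinset fun _ : Fin n => A) \ piFinset fun _ => A.erase a := by
  ext s
  simp only [mem_filter, mem_sdiff, mem_piFinset, mem_erase, not_forall]
  constructor
  · rintro ⟨hA, i, rfl⟩
    exact ⟨hA, i, fun h => h.1 rfl⟩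
  · rintro ⟨hA, i, hi⟩
    exact ⟨hA, i, not_not.mp fun h => hi ⟨h, hA i⟩⟩

theorem sum_prod_filter_piFinset_const_exists_eq [CommRing R] (f : α → R) {A : Finset α}
    {a : α} (ha : a ∈ A) (n : ℕ) :
    ∑ s ∈ (piFinset fun _ : Fin n => A).filter (fun s => ∃ i, s i = a), ∏ i, f (s i)
      = (∑ x ∈ A, f x) ^ n - (∑ x ∈ A, f x - f a) ^ n := by
  have hsub : (piFinset fun _ : Fin n => A.erase a) ⊆ piFinset fun _ => A :=
    piFinset_subset _ _ fun _ => erase_subset a A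
  rw [filter_piFinset_const_exists_eq, sum_sdiff_eq_sub hsub, ← sum_pow', ← sum_pow',
    sum_erase_eq_sub ha]

end

/-- The product weight `∏ i, π (s i)` models `N` i.i.d. draws; as `r` is injective, the best
sample of `s` is `y` exactly when `y` occurs in `s` and no sample scores above `r y`. -/
theorem stmt_1_general {Y : Type*} [Fintype Y]
    (π : Y → ℝ)
    (r : Y → ℝ)
    (N : ℕ) (y : Y) :
    ∑ s ∈ Finset.univ.filter
        (fun s : Fin N → Y => (∃ i, s i = y) ∧ ∀ i, r (s i) ≤ r y),
      ∏ i, π (s i)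
    = (∑ y' ∈ Finset.univ.filter (fun y' => r y' ≤ r y), π y') ^ N
      - ((∑ y' ∈ Finset.univ.filter (fun y' => r y' ≤ r y), π y') - π y) ^ N := by
  set A := Finset.univ.filter fun y' => r y' ≤ r y
  have hevent : Finset.univ.filter (fun s : Fin N → Y => (∃ i, s i = y) ∧ ∀ i, r (s i) ≤ r y)
      = (Fintype.piFinset fun _ => A).filter fun s => ∃ i, s i = y := by
    ext s
    simp [A, and_comm]
  rw [hevent, sum_prod_filter_piFinset_const_exists_eq π (by simp [A])]

/-- **Distribution of the Best-of-N sample.**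
Draw `N` i.i.d. samples from a positive pmf `π` on a finite type `Y` (modelled by the product
distribution on tuples `s : Fin N → Y`, with joint probability `∏ i, π (s i)`), and let `Y*` be
the sample with the maximal (injective) verifier score `r`.  Since `r` is injective, for a tuple
`s` the event `Y* = y` is exactly: `y` occurs among the samples and every sample has score
`≤ r y`.  Then `P(Y* = y) = F(y)^N − (F(y) − π(y))^N`, where `F(y) = ∑_{y' : r y' ≤ r y} π y'`. -/
theorem stmt_1 {Y : Type*} [Fintype Y]
    (π : Y → ℝ) (hπpos : ∀ y, 0 < π y) (hπsum : ∑ y, π y = 1)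
    (r : Y → ℝ) (hr : Function.Injective r)
    (N : ℕ) (hN : 1 ≤ N) (y : Y) :
    ∑ s ∈ Finset.univ.filter
        (fun s : Fin N → Y => (∃ i, s i = y) ∧ ∀ i, r (s i) ≤ r y),
      ∏ i, π (s i)
    = (∑ y' ∈ Finset.univ.filter (fun y' => r y' ≤ r y), π y') ^ N
      - ((∑ y' ∈ Finset.univ.filter (fun y' => r y' ≤ r y), π y') - π y) ^ N :=
  stmt_1_general π r N y
end

section
/- Let Y be a finite type, π a positive pmf on Y, R : Y → {0,1} a binary reward, and N ≥ 1 an integer. Set p = ∑_{y : R(y)=0} π(y) and assume 0 < p < 1. Draw Y₁,…,Y_N i.i.d. from π, let M = {i : R(Y_i) = 1} if this set is nonempty and M = {1,…,N} otherwise, draw an index I uniformly at random from M (independently of everything else given Y₁,…,Y_N), and set Y* = Y_I. Then for every y ∈ Y: P(Y* = y) = π(y)·p^{N−1} if R(y) = 0, and P(Y* = y) = π(y)·(1 − p^N)/(1 − p) if R(y) = 1. -/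
/-!
Group the tuples `s` by their label pattern `ℓ ∘ s`, where `ℓ` records the reward. Given the
pattern `a`, the coordinates are independent and `s i` is distributed as `π` restricted to the
label class `a i`, while the selected set depends on `a` only. Hence
`P(Y* = y) · π(ℓ⁻¹ (ℓ y)) = π y · P(the selected index has label ℓ y)`. Under the Best-of-N rule
the selected index is unrewarded exactly when no index is rewarded, which has probability `p ^ N`;
dividing by `p` resp. `1 - p` gives the two formulas.
-/

open scoped Classical

open Finset

section LabelledSampling

variable {ι Y L : Type*} [Fintype ι] [DecidableEq ι] [Fintype Y] [DecidableEq L]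

noncomputable def labelMass (π : Y → ℝ) (ℓ : Y → L) (l : L) : ℝ := ∑ v with ℓ v = l, π v

lemma sum_labelMass [Fintype L] (π : Y → ℝ) (ℓ : Y → L) : ∑ l, labelMass π ℓ l = ∑ v, π v :=
  sum_fiberwise univ ℓ π

lemma sum_prod_labelMass [Fintype L] (π : Y → ℝ) (ℓ : Y → L) :
    ∑ a : ι → L, ∏ j, labelMass π ℓ (a j) = (∑ v, π v) ^ Fintype.card ι := by
  rw [← Fintype.prod_sum, ← card_univ, ← prod_const]
  exact prod_congr rfl fun _ _ => sum_labelMass π ℓ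

lemma sum_fiber_prod_mul_labelMass (π : Y → ℝ) (ℓ : Y → L) (a : ι → L) (i : ι) (y : Y) :
    (∑ s : ι → Y with ℓ ∘ s = a ∧ s i = y, ∏ j, π (s j)) * labelMass π ℓ (ℓ y)
      = if a i = ℓ y then π y * ∏ j, labelMass π ℓ (a j) else 0 := by
  have hfactor : ∑ s : ι → Y with ℓ ∘ s = a ∧ s i = y, ∏ j, π (s j)
      = ∏ j, ∑ v, if ℓ v = a j ∧ (j = i → v = y) then π v else 0 := by
    rw [Fintype.prod_sum, sum_filter]
    refine sum_congr rfl fun s _ => ?_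
    rw [prod_ite_zero]
    congr 1
    simp only [mem_univ, true_implies, funext_iff, Function.comp_apply, forall_and, forall_eq]
  have hother : ∀ j ∈ univ.erase i,
      (∑ v, if ℓ v = a j ∧ (j = i → v = y) then π v else 0) = labelMass π ℓ (a j) := by
    intro j hj
    simp [ne_of_mem_erase hj, labelMass, sum_filter]
  have hself : (∑ v, if ℓ v = a i ∧ (i = i → v = y) then π v else 0)
      = if a i = ℓ y then π y else 0 := by
    simp only [true_implies, and_comm (a := ℓ _ = a i), ite_and, sum_ite_eq', mem_univ, if_true,
      eq_comm (a := a i)]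
  rw [hfactor, ← mul_prod_erase univ _ (mem_univ i), prod_congr rfl hother, hself]
  split_ifs with h
  · rw [← mul_prod_erase univ (fun j => labelMass π ℓ (a j)) (mem_univ i), h]
    ring
  · ring

lemma sum_select_mul_labelMass [Fintype L] (π : Y → ℝ) (ℓ : Y → L) (sel : (ι → L) → Finset ι)
    (y : Y) :
    (∑ s : ι → Y, (∏ j, π (s j)) * #{i ∈ sel (ℓ ∘ s) | s i = y} / #(sel (ℓ ∘ s)))
        * labelMass π ℓ (ℓ y)
      = π y * ∑ a : ι → L, (∏ j, labelMass π ℓ (a j)) * #{i ∈ sel a | a i = ℓ y} / #(sel a) := by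
  rw [← sum_fiberwise univ (ℓ ∘ ·), sum_mul, mul_sum]
  refine sum_congr rfl fun a _ => ?_
  have hfiber : ∑ s ∈ univ with ℓ ∘ s = a,
        (∏ j, π (s j)) * #{i ∈ sel (ℓ ∘ s) | s i = y} / #(sel (ℓ ∘ s))
      = (∑ i ∈ sel a, ∑ s : ι → Y with ℓ ∘ s = a ∧ s i = y, ∏ j, π (s j)) / #(sel a) := by
    calc _ = ∑ s ∈ univ with ℓ ∘ s = a,
            (∑ i ∈ sel a, if s i = y then ∏ j, π (s j) else 0) / #(sel a) := by
          refine sum_congr rfl fun s hs => ?_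
          rw [(mem_filter.1 hs).2, sum_ite, sum_const, sum_const_zero, add_zero, nsmul_eq_mul,
            mul_comm]
      _ = _ := by
          rw [← sum_div, sum_comm]
          simp only [← sum_filter, filter_filter]
  rw [hfiber, div_mul_eq_mul_div, sum_mul,
    sum_congr rfl fun i _ => sum_fiber_prod_mul_labelMass π ℓ a i y,
    sum_ite, sum_const_zero, add_zero, sum_const, nsmul_eq_mul]
  ring

end LabelledSampling

section BestOfN

variable {ι Y : Type*} [Fintype ι]

noncomputable def bonCandidates (a : ι → Bool) : Finset ι :=
  if (univ.filter fun i => a i = true).Nonempty then univ.filter fun i => a i = true else univ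

lemma filter_true_nonempty_iff (a : ι → Bool) :
    (univ.filter fun i => a i = true).Nonempty ↔ a ≠ fun _ => false := by
  simp [filter_nonempty_iff, funext_iff]

lemma card_filter_true_div_card_bonCandidates (a : ι → Bool) :
    (#{i ∈ bonCandidates a | a i = true} : ℝ) / #(bonCandidates a)
      = if a = (fun _ => false) then 0 else 1 := by
  by_cases ha : a = fun _ => false
  · simp [ha]
  · have hne := (filter_true_nonempty_iff a).2 ha
    rw [bonCandidates, if_pos hne, filter_filter, if_neg ha]
    simp only [and_self]
    exact div_self (Nat.cast_ne_zero.2 hne.card_pos.ne')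

lemma card_filter_false_div_card_bonCandidates [Nonempty ι] (a : ι → Bool) :
    (#{i ∈ bonCandidates a | a i = false} : ℝ) / #(bonCandidates a)
      = if a = (fun _ => false) then 1 else 0 := by
  by_cases ha : a = fun _ => false
  · subst ha
    simp [bonCandidates]
  · have hne := (filter_true_nonempty_iff a).2 ha
    rw [bonCandidates, if_pos hne, filter_filter, if_neg ha]
    simp

variable [DecidableEq ι] [Fintype Y]

lemma sum_prod_labelMass_mul_card_filter_false_div [Nonempty ι] (π : Y → ℝ) (ℓ : Y → Bool) :
    ∑ a : ι → Bool,
        (∏ j, labelMass π ℓ (a j)) * #{i ∈ bonCandidates a | a i = false} / #(bonCandidates a)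
      = labelMass π ℓ false ^ Fintype.card ι := by
  simp only [mul_div_assoc, card_filter_false_div_card_bonCandidates, mul_ite, mul_one, mul_zero,
    sum_ite_eq', mem_univ, if_true, prod_const, card_univ]

lemma sum_prod_labelMass_mul_card_filter_true_div (π : Y → ℝ) (ℓ : Y → Bool) :
    ∑ a : ι → Bool,
        (∏ j, labelMass π ℓ (a j)) * #{i ∈ bonCandidates a | a i = true} / #(bonCandidates a)
      = (∑ v, π v) ^ Fintype.card ι - labelMass π ℓ false ^ Fintype.card ι := by
  simp only [mul_div_assoc, card_filter_true_div_card_bonCandidates, mul_ite, mul_one, mul_zero]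
  rw [sum_ite, sum_const_zero, zero_add, filter_ne', sum_erase_eq_sub (mem_univ _),
    sum_prod_labelMass, prod_const, card_univ]

end BestOfN

theorem stmt_2_general {Y : Type*} [Fintype Y]
    (π : Y → ℝ) (hπsum : ∑ y, π y = 1)
    (R : Y → ℝ) (hR : ∀ y, R y = 0 ∨ R y = 1)
    (N : ℕ) (hN : 1 ≤ N)
    (p : ℝ) (hp : p = ∑ y ∈ Finset.univ.filter (fun y => R y = 0), π y)
    (hp0 : 0 < p) (hp1 : p < 1)
    (M : (Fin N → Y) → Finset (Fin N))
    (hM : ∀ s, M s =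
      if (Finset.univ.filter (fun i => R (s i) = 1)).Nonempty
      then Finset.univ.filter (fun i => R (s i) = 1)
      else Finset.univ)
    (y : Y) :
    ∑ s : Fin N → Y,
        (∏ i, π (s i)) * (((M s).filter (fun i => s i = y)).card : ℝ) / ((M s).card : ℝ)
      = if R y = 0 then π y * p ^ (N - 1) else π y * (1 - p ^ N) / (1 - p) := by
  set ℓ : Y → Bool := fun v => decide (R v = 1)
  have hfalse : labelMass π ℓ false = p := by
    simp only [hp, labelMass]
    refine sum_congr (filter_congr fun v _ => ?_) fun _ _ => rfl
    rcases hR v with h | h <;> simp [ℓ, h]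
  have htrue : labelMass π ℓ true = 1 - p := by
    have h := sum_labelMass π ℓ
    rw [Fintype.sum_bool, hπsum, hfalse] at h
    linarith
  have hmain := sum_select_mul_labelMass π ℓ (bonCandidates (ι := Fin N)) y
  have hMsel : ∀ s, bonCandidates (ℓ ∘ s) = M s := fun s => by simp [hM, bonCandidates, ℓ]
  simp only [hMsel] at hmain
  have : Nonempty (Fin N) := ⟨⟨0, hN⟩⟩
  split_ifs with hy
  · have hyf : ℓ y = false := by simp [ℓ, hy]
    rw [hyf, sum_prod_labelMass_mul_card_filter_false_div, hfalse, Fintype.card_fin,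
      ← pow_sub_one_mul (by omega : N ≠ 0), ← mul_assoc] at hmain
    exact mul_right_cancel₀ hp0.ne' hmain
  · have hyt : ℓ y = true := by simp [ℓ, (hR y).resolve_left hy]
    rw [hyt, sum_prod_labelMass_mul_card_filter_true_div, htrue, hπsum, hfalse, one_pow,
      Fintype.card_fin] at hmain
    rw [eq_div_iff (sub_ne_zero.2 hp1.ne'), hmain]

/-- **Closed form of the binary-reward Best-of-N distribution.**
Draw `N` i.i.d. samples from a positive pmf `π` on a finite type `Y` (modelled by the product
distribution on tuples `s : Fin N → Y`).  Given the tuple `s`, let `M` be the set of indices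
with reward `1` if nonempty, and otherwise all indices; choose an index `I` uniformly from `M`
and return `Y* = s I`.  With `p = ∑_{y : R y = 0} π y ∈ (0,1)`, the probability that `Y* = y`
is `π y * p^(N−1)` if `R y = 0` and `π y * (1 − p^N)/(1 − p)` if `R y = 1`. -/
theorem stmt_2 {Y : Type*} [Fintype Y]
    (π : Y → ℝ) (hπpos : ∀ y, 0 < π y) (hπsum : ∑ y, π y = 1)
    (R : Y → ℝ) (hR : ∀ y, R y = 0 ∨ R y = 1)
    (N : ℕ) (hN : 1 ≤ N)
    (p : ℝ) (hp : p = ∑ y ∈ Finset.univ.filter (fun y => R y = 0), π y)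
    (hp0 : 0 < p) (hp1 : p < 1)
    (M : (Fin N → Y) → Finset (Fin N))
    (hM : ∀ s, M s =
      if (Finset.univ.filter (fun i => R (s i) = 1)).Nonempty
      then Finset.univ.filter (fun i => R (s i) = 1)
      else Finset.univ)
    (y : Y) :
    ∑ s : Fin N → Y,
        (∏ i, π (s i)) * (((M s).filter (fun i => s i = y)).card : ℝ) / ((M s).card : ℝ)
      = if R y = 0 then π y * p ^ (N - 1) else π y * (1 - p ^ N) / (1 - p) :=
  stmt_2_general π hπsum R hR N hN p hp hp0 hp1 M hM y
end

section
/- With Y a finite type, a differentiable parameterized family θ ↦ π_θ of positive pmfs on Y, a kernel w : Y × Y → ℝ, and λ > 0, define Q_θ(y) = ∑_{y'} π_θ(y')·w(y,y'), Z_θ = ∑_y π_θ(y)·exp(λ·Q_θ(y)), π_bon,θ(y) = π_θ(y)·exp(λ·Q_θ(y))/Z_θ, and ∇_θ f(y;θ) = ∇_θ log π_θ(y) + λ·∑_{y'} π_θ(y')·∇_θ log π_θ(y')·w(y,y'). Then the gradient of the log-partition function satisfies ∇_θ log Z_θ = ∑_y π_bon,θ(y)·∇_θ f(y;θ). -/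
/-!
Since `π θ y > 0`, the partition function is a log-sum-exp,
`Z θ = ∑ y, exp (log (π θ y) + λ Q θ y)`, whose gradient is the softmax average
`∑ y, πbon θ y • ∇ (log (π θ y) + λ Q θ y)`. The log-derivative trick
`∇ π = π • ∇ log π` turns `∇ Q θ y` into `∑ y', (π θ y' * w y y') • ∇ log (π θ y')`.
-/

section

variable {E : Type*} [NormedAddCommGroup E] [NormedSpace ℝ E] {ι : Type*} [Fintype ι]

theorem hasFDerivAt_log_sum_exp [Nonempty ι] {h : ι → E → ℝ} {h' : ι → E →L[ℝ] ℝ} {x : E}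
    (hh : ∀ i, HasFDerivAt (h i) (h' i) x) :
    HasFDerivAt (fun t => Real.log (∑ i, Real.exp (h i t)))
      (∑ i, (Real.exp (h i x) / ∑ j, Real.exp (h j x)) • h' i) x := by
  have hsum_pos : 0 < ∑ j, Real.exp (h j x) :=
    Finset.sum_pos (fun j _ => Real.exp_pos _) Finset.univ_nonempty
  have hsum : HasFDerivAt (fun t => ∑ i, Real.exp (h i t)) (∑ i, Real.exp (h i x) • h' i) x :=
    HasFDerivAt.fun_sum fun i _ => (hh i).exp
  convert hsum.log hsum_pos.ne' using 1
  simp only [Finset.smul_sum, smul_smul, div_eq_inv_mul]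

theorem DifferentiableAt.hasFDerivAt_smul_fderiv_log {f : E → ℝ} {x : E}
    (hf : DifferentiableAt ℝ f x) (hx : f x ≠ 0) :
    HasFDerivAt f (f x • fderiv ℝ (fun t => Real.log (f t)) x) x := by
  rw [(hf.hasFDerivAt.log hx).fderiv, smul_smul, mul_inv_cancel₀ hx, one_smul]
  exact hf.hasFDerivAt

theorem hasFDerivAt_sum_mul_const_via_fderiv_log {p : E → ι → ℝ} {x : E}
    (hp : ∀ i, DifferentiableAt ℝ (fun t => p t i) x) (hx : ∀ i, p x i ≠ 0) (c : ι → ℝ) :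
    HasFDerivAt (fun t => ∑ i, p t i * c i)
      (∑ i, (p x i * c i) • fderiv ℝ (fun t => Real.log (p t i)) x) x := by
  have hsum := HasFDerivAt.fun_sum (u := Finset.univ) fun i _ =>
    ((hp i).hasFDerivAt_smul_fderiv_log (hx i)).mul_const (c i)
  simpa only [smul_smul, mul_comm (c _)] using hsum

end

theorem stmt_4_general {Y : Type*} [Fintype Y] {d : ℕ}
    (π : (Fin d → ℝ) → Y → ℝ)
    (hpos : ∀ θ y, 0 < π θ y) (hsum : ∀ θ, ∑ y, π θ y = 1)
    (hdiff : ∀ y, Differentiable ℝ (fun θ => π θ y))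
    (w : Y → Y → ℝ) (lam : ℝ)
    (Q : (Fin d → ℝ) → Y → ℝ)
    (hQ : ∀ θ y, Q θ y = ∑ y', π θ y' * w y y')
    (Z : (Fin d → ℝ) → ℝ)
    (hZ : ∀ θ, Z θ = ∑ y, π θ y * Real.exp (lam * Q θ y))
    (πbon : (Fin d → ℝ) → Y → ℝ)
    (hbon : ∀ θ y, πbon θ y = π θ y * Real.exp (lam * Q θ y) / Z θ)
    (gradf : Y → (Fin d → ℝ) → (Fin d → ℝ) →L[ℝ] ℝ)
    (hgradf : ∀ y θ, gradf y θ =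
      fderiv ℝ (fun t => Real.log (π t y)) θ
        + lam • ∑ y', (π θ y' * w y y') • fderiv ℝ (fun t => Real.log (π t y')) θ)
    (θ : Fin d → ℝ) :
    fderiv ℝ (fun t => Real.log (Z t)) θ = ∑ y, πbon θ y • gradf y θ := by
  have : Nonempty Y := by
    by_contra hY
    simpa [not_nonempty_iff.mp hY] using hsum θ
  set h : Y → (Fin d → ℝ) → ℝ := fun y t => Real.log (π t y) + lam * Q t y
  have hexp : ∀ t y, Real.exp (h y t) = π t y * Real.exp (lam * Q t y) := fun t y => by
    rw [Real.exp_add, Real.exp_log (hpos t y)]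
  have hlogZ : (fun t => Real.log (Z t)) = fun t => Real.log (∑ y, Real.exp (h y t)) := by
    simp only [hexp, hZ]
  have hh : ∀ y, HasFDerivAt (h y) (gradf y θ) θ := fun y => by
    rw [hgradf]
    refine (((hdiff y θ).log (hpos θ y).ne').hasFDerivAt).add (HasFDerivAt.const_mul ?_ lam)
    simp only [hQ]
    exact hasFDerivAt_sum_mul_const_via_fderiv_log (fun y' => hdiff y' θ)
      (fun y' => (hpos θ y').ne') _
  rw [hlogZ, (hasFDerivAt_log_sum_exp hh).fderiv]
  simp only [hbon, hexp, hZ]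

/-- **Gradient of the log-partition function of the variational Best-of-N policy.**
For a differentiable parameterized family `θ ↦ π θ` of positive pmfs on a finite type `Y`,
a kernel `w`, and `λ > 0`, with `Q θ y = ∑ y', π θ y' * w y y'`,
`Z θ = ∑ y, π θ y * exp (λ * Q θ y)`, `π_bon θ y = π θ y * exp (λ * Q θ y) / Z θ`, and
`∇f(y;θ) = ∇ log π θ y + λ • ∑ y', (π θ y' * w y y') • ∇ log π θ y'`, we have
`∇ log Z θ = ∑ y, π_bon θ y • ∇f(y;θ)`. -/
theorem stmt_4 {Y : Type*} [Fintype Y] {d : ℕ}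
    (π : (Fin d → ℝ) → Y → ℝ)
    (hpos : ∀ θ y, 0 < π θ y) (hsum : ∀ θ, ∑ y, π θ y = 1)
    (hdiff : ∀ y, Differentiable ℝ (fun θ => π θ y))
    (w : Y → Y → ℝ) (lam : ℝ) (hlam : 0 < lam)
    (Q : (Fin d → ℝ) → Y → ℝ)
    (hQ : ∀ θ y, Q θ y = ∑ y', π θ y' * w y y')
    (Z : (Fin d → ℝ) → ℝ)
    (hZ : ∀ θ, Z θ = ∑ y, π θ y * Real.exp (lam * Q θ y))
    (πbon : (Fin d → ℝ) → Y → ℝ)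
    (hbon : ∀ θ y, πbon θ y = π θ y * Real.exp (lam * Q θ y) / Z θ)
    (gradf : Y → (Fin d → ℝ) → (Fin d → ℝ) →L[ℝ] ℝ)
    (hgradf : ∀ y θ, gradf y θ =
      fderiv ℝ (fun t => Real.log (π t y)) θ
        + lam • ∑ y', (π θ y' * w y y') • fderiv ℝ (fun t => Real.log (π t y')) θ)
    (θ : Fin d → ℝ) :
    fderiv ℝ (fun t => Real.log (Z t)) θ = ∑ y, πbon θ y • gradf y θ :=
  stmt_4_general π hpos hsum hdiff w lam Q hQ Z hZ πbon hbon gradf hgradf θ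
end

section
/- With Y a finite type, a differentiable parameterized family θ ↦ π_θ of positive pmfs on Y, a kernel w : Y × Y → ℝ, and λ > 0, define Q_θ(y) = ∑_{y'} π_θ(y')·w(y,y'), Z_θ = ∑_y π_θ(y)·exp(λ·Q_θ(y)), π_bon,θ(y) = π_θ(y)·exp(λ·Q_θ(y))/Z_θ, and ∇_θ f(y;θ) = ∇_θ log π_θ(y) + λ·∑_{y'} π_θ(y')·∇_θ log π_θ(y')·w(y,y'). Then for every y ∈ Y, ∇_θ log π_bon,θ(y) = ∇_θ f(y;θ) − ∑_{y''} π_bon,θ(y'')·∇_θ f(y'';θ). -/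
/-! π_bon is the softmax of the scores `s θ y = log π θ y + λ Q θ y`, and `∇ s(y; θ)` is exactly
`∇f(y; θ)` because `∇ π = π • ∇ log π`. The gradient of a log-softmax is the gradient of the
score minus its softmax-weighted average, as `∇ log ∑ exp s = ∑ softmax • ∇ s`. -/

section LogSoftmax

variable {E : Type*} [NormedAddCommGroup E] [NormedSpace ℝ E] {Y : Type*} [Fintype Y]
  {s : E → Y → ℝ} {s' : Y → E →L[ℝ] ℝ} {x : E}

theorem HasFDerivAt.log_sum_exp [Nonempty Y] (hs : ∀ y, HasFDerivAt (fun t => s t y) (s' y) x) :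
    HasFDerivAt (fun t => Real.log (∑ y, Real.exp (s t y)))
      (∑ y, (Real.exp (s x y) / ∑ y', Real.exp (s x y')) • s' y) x := by
  have hsum_pos : 0 < ∑ y, Real.exp (s x y) :=
    Finset.sum_pos (fun y _ => Real.exp_pos _) Finset.univ_nonempty
  convert (HasFDerivAt.fun_sum fun y _ => (hs y).exp).log hsum_pos.ne' using 1
  simp only [Finset.smul_sum, smul_smul, div_eq_inv_mul]

theorem HasFDerivAt.log_softmax [Nonempty Y] (hs : ∀ y, HasFDerivAt (fun t => s t y) (s' y) x)
    (y : Y) :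
    HasFDerivAt (fun t => Real.log (Real.exp (s t y) / ∑ y', Real.exp (s t y')))
      (s' y - ∑ y'', (Real.exp (s x y'') / ∑ y', Real.exp (s x y')) • s' y'') x := by
  have hlog : (fun t => Real.log (Real.exp (s t y) / ∑ y', Real.exp (s t y')))
      = fun t => s t y - Real.log (∑ y', Real.exp (s t y')) := by
    funext t
    have hsum_pos : 0 < ∑ y', Real.exp (s t y') :=
      Finset.sum_pos (fun y _ => Real.exp_pos _) Finset.univ_nonempty
    rw [Real.log_div (Real.exp_ne_zero _) hsum_pos.ne', Real.log_exp]
  rw [hlog]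
  exact (hs y).sub (HasFDerivAt.log_sum_exp hs)

end LogSoftmax

theorem HasFDerivAt.of_log {E : Type*} [NormedAddCommGroup E] [NormedSpace ℝ E] {f : E → ℝ}
    {f' : E →L[ℝ] ℝ} {x : E} (hf : ∀ t, 0 < f t)
    (hlog : HasFDerivAt (fun t => Real.log (f t)) f' x) :
    HasFDerivAt f (f x • f') x := by
  simpa only [Real.exp_log (hf _)] using hlog.exp

theorem stmt_5_general {Y : Type*} [Fintype Y] {d : ℕ}
    (π : (Fin d → ℝ) → Y → ℝ)
    (hpos : ∀ θ y, 0 < π θ y)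
    (hdiff : ∀ y, Differentiable ℝ (fun θ => π θ y))
    (w : Y → Y → ℝ) (lam : ℝ)
    (Q : (Fin d → ℝ) → Y → ℝ)
    (hQ : ∀ θ y, Q θ y = ∑ y', π θ y' * w y y')
    (Z : (Fin d → ℝ) → ℝ)
    (hZ : ∀ θ, Z θ = ∑ y, π θ y * Real.exp (lam * Q θ y))
    (πbon : (Fin d → ℝ) → Y → ℝ)
    (hbon : ∀ θ y, πbon θ y = π θ y * Real.exp (lam * Q θ y) / Z θ)
    (gradf : Y → (Fin d → ℝ) → (Fin d → ℝ) →L[ℝ] ℝ)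
    (hgradf : ∀ y θ, gradf y θ =
      fderiv ℝ (fun t => Real.log (π t y)) θ
        + lam • ∑ y', (π θ y' * w y y') • fderiv ℝ (fun t => Real.log (π t y')) θ)
    (θ : Fin d → ℝ) :
    ∀ y, fderiv ℝ (fun t => Real.log (πbon t y)) θ
      = gradf y θ - ∑ y'', πbon θ y'' • gradf y'' θ := by
  intro y
  have : Nonempty Y := ⟨y⟩
  have hlogπ : ∀ y, HasFDerivAt (fun t => Real.log (π t y))
      (fderiv ℝ (fun t => Real.log (π t y)) θ) θ := fun y =>
    ((hdiff y θ).log (hpos θ y).ne').hasFDerivAt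
  have hQd : ∀ y, HasFDerivAt (fun t => Q t y)
      (∑ y', (π θ y' * w y y') • fderiv ℝ (fun t => Real.log (π t y')) θ) θ := by
    intro y
    simp only [funext fun t => hQ t y, mul_comm (π θ _), mul_smul]
    exact HasFDerivAt.fun_sum fun y' _ => ((hlogπ y').of_log (hpos · y')).mul_const (w y y')
  have hs : ∀ y, HasFDerivAt (fun t => Real.log (π t y) + lam * Q t y) (gradf y θ) θ := by
    intro y
    rw [hgradf]
    exact (hlogπ y).add ((hQd y).const_mul lam)
  have hsoftmax : ∀ t y, πbon t y
      = Real.exp (Real.log (π t y) + lam * Q t y)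
        / ∑ y', Real.exp (Real.log (π t y') + lam * Q t y') := by
    intro t y
    simp only [hbon, hZ, Real.exp_add, Real.exp_log (hpos t _)]
  simp only [hsoftmax]
  exact (HasFDerivAt.log_softmax hs y).fderiv

/-- **Gradient of the log-likelihood of the variational Best-of-N policy.**
For a differentiable parameterized family `θ ↦ π θ` of positive pmfs on a finite type `Y`,
a kernel `w`, and `λ > 0`, with `Q θ y = ∑ y', π θ y' * w y y'`,
`Z θ = ∑ y, π θ y * exp (λ * Q θ y)`, `π_bon θ y = π θ y * exp (λ * Q θ y) / Z θ`, and
`∇f(y;θ) = ∇ log π θ y + λ • ∑ y', (π θ y' * w y y') • ∇ log π θ y'`, we have, for every `y`,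
`∇ log π_bon θ y = ∇f(y;θ) − ∑ y'', π_bon θ y'' • ∇f(y'';θ)`. -/
theorem stmt_5 {Y : Type*} [Fintype Y] {d : ℕ}
    (π : (Fin d → ℝ) → Y → ℝ)
    (hpos : ∀ θ y, 0 < π θ y) (hsum : ∀ θ, ∑ y, π θ y = 1)
    (hdiff : ∀ y, Differentiable ℝ (fun θ => π θ y))
    (w : Y → Y → ℝ) (lam : ℝ) (hlam : 0 < lam)
    (Q : (Fin d → ℝ) → Y → ℝ)
    (hQ : ∀ θ y, Q θ y = ∑ y', π θ y' * w y y')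
    (Z : (Fin d → ℝ) → ℝ)
    (hZ : ∀ θ, Z θ = ∑ y, π θ y * Real.exp (lam * Q θ y))
    (πbon : (Fin d → ℝ) → Y → ℝ)
    (hbon : ∀ θ y, πbon θ y = π θ y * Real.exp (lam * Q θ y) / Z θ)
    (gradf : Y → (Fin d → ℝ) → (Fin d → ℝ) →L[ℝ] ℝ)
    (hgradf : ∀ y θ, gradf y θ =
      fderiv ℝ (fun t => Real.log (π t y)) θ
        + lam • ∑ y', (π θ y' * w y y') • fderiv ℝ (fun t => Real.log (π t y')) θ)
    (θ : Fin d → ℝ) :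
    ∀ y, fderiv ℝ (fun t => Real.log (πbon t y)) θ
      = gradf y θ - ∑ y'', πbon θ y'' • gradf y'' θ :=
  stmt_5_general π hpos hdiff w lam Q hQ Z hZ πbon hbon gradf hgradf θ
end

section
/- (BoN-SFT, Lemma 1) Let X and Y be finite types, D a pmf on X × Y with marginal D_X on X, θ ↦ π_θ(·|x) a differentiable parameterized family of positive pmfs on Y for each x ∈ X, r : X × Y → ℝ a verifier score, σ(t) = 1/(1 + exp(−t)) the logistic sigmoid, and λ > 0. Define Q_θ(x,y) = ∑_{y'} π_θ(y'|x)·σ(r(x,y) − r(x,y')), Z_θ(x) = ∑_y π_θ(y|x)·exp(λ·Q_θ(x,y)), π_bon,θ(y|x) = π_θ(y|x)·exp(λ·Q_θ(x,y))/Z_θ(x), and ∇_θ f(x,y;θ) = ∇_θ log π_θ(y|x) + λ·∑_{y'} π_θ(y'|x)·∇_θ log π_θ(y'|x)·σ(r(x,y) − r(x,y')). Then the gradient with respect to θ of L(θ) = ∑_{(x,y)} D(x,y)·log π_bon,θ(y|x) equals ∑_{(x,y)} D(x,y)·∇_θ f(x,y;θ) − ∑_x D_X(x)·∑_y π_bon,θ(y|x)·∇_θ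 f(x,y;θ). -/
/-!
Put `g(x,y;θ) = log π_θ(y|x) + λ Q_θ(x,y)`. Then `π_bon = exp g / ∑_y exp g` is a softmax, so
`log π_bon = g - log ∑_y exp g` and its gradient is `∇g - ∑_y π_bon ∇g`. By the score-function
identity `∇π = π ∇log π`, the gradient of `Q` is the `λ`-term of `∇f`, hence `∇g = ∇f`. Averaging
over `D` and collecting the normalizer terms by prompt produces the marginal `D_X`.
-/

section

open Real Finset

variable {E : Type*} [NormedAddCommGroup E] [NormedSpace ℝ E] {θ : E}

theorem smul_fderiv_log {p : E → ℝ} (hp : DifferentiableAt ℝ p θ) (hp0 : p θ ≠ 0) :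
    p θ • fderiv ℝ (fun t => log (p t)) θ = fderiv ℝ p θ := by
  rw [(hp.hasFDerivAt.log hp0).fderiv, smul_smul, mul_inv_cancel₀ hp0, one_smul]

theorem hasFDerivAt_sum_mul_const {ι : Type*} [Fintype ι] {p : ι → E → ℝ}
    (hp : ∀ j, DifferentiableAt ℝ (p j) θ) (hp0 : ∀ j, p j θ ≠ 0) (c : ι → ℝ) :
    HasFDerivAt (fun t => ∑ j, p j t * c j)
      (∑ j, (p j θ * c j) • fderiv ℝ (fun t => log (p j t)) θ) θ := by
  refine (HasFDerivAt.fun_sum fun j _ => (hp j).hasFDerivAt.mul_const (c j)).congr_fderiv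
    (sum_congr rfl fun j _ => ?_)
  rw [mul_comm, mul_smul, smul_fderiv_log (hp j) (hp0 j)]

theorem hasFDerivAt_log_exp_div_sum_exp {ι : Type*} [Fintype ι] {g : ι → E → ℝ}
    {g' : ι → E →L[ℝ] ℝ} (hg : ∀ j, HasFDerivAt (g j) (g' j) θ) (i : ι) :
    HasFDerivAt (fun t => log (exp (g i t) / ∑ j, exp (g j t)))
      (g' i - ∑ j, (exp (g j θ) / ∑ k, exp (g k θ)) • g' j) θ := by
  have hZ : ∀ t, 0 < ∑ j, exp (g j t) := fun t =>
    sum_pos (fun j _ => exp_pos _) ⟨i, mem_univ i⟩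
  have hlog : (fun t => log (exp (g i t) / ∑ j, exp (g j t)))
      = fun t => g i t - log (∑ j, exp (g j t)) := by
    funext t
    rw [log_div (exp_ne_zero _) (hZ t).ne', log_exp]
  rw [hlog]
  have hlogZ := (HasFDerivAt.fun_sum (u := univ) fun j _ => (hg j).exp).log (hZ θ).ne'
  refine ((hg i).fun_sub hlogZ).congr_fderiv ?_
  simp only [smul_sum, smul_smul, div_eq_inv_mul]

theorem sum_prod_smul_sub {X Y R M : Type*} [Fintype X] [Fintype Y] [Ring R] [AddCommGroup M]
    [Module R M] (D : X × Y → R) (a : X × Y → M) (b : X → M) :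
    ∑ q, D q • (a q - b q.1) = ∑ q, D q • a q - ∑ x, (∑ y, D (x, y)) • b x := by
  simp only [smul_sub, sum_sub_distrib, Fintype.sum_prod_type, sum_smul]

end

theorem stmt_6_general {X Y : Type*} [Fintype X] [Fintype Y] {d : ℕ}
    (D : X × Y → ℝ)
    (DX : X → ℝ) (hDX : ∀ x, DX x = ∑ y, D (x, y))
    (π : (Fin d → ℝ) → X → Y → ℝ)
    (hpos : ∀ θ x y, 0 < π θ x y)
    (hdiff : ∀ x y, Differentiable ℝ (fun θ => π θ x y))
    (r : X → Y → ℝ)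
    (sig : ℝ → ℝ)
    (lam : ℝ)
    (Q : (Fin d → ℝ) → X → Y → ℝ)
    (hQ : ∀ θ x y, Q θ x y = ∑ y', π θ x y' * sig (r x y - r x y'))
    (Z : (Fin d → ℝ) → X → ℝ)
    (hZ : ∀ θ x, Z θ x = ∑ y, π θ x y * Real.exp (lam * Q θ x y))
    (πbon : (Fin d → ℝ) → X → Y → ℝ)
    (hbon : ∀ θ x y, πbon θ x y = π θ x y * Real.exp (lam * Q θ x y) / Z θ x)
    (gradf : X → Y → (Fin d → ℝ) → (Fin d → ℝ) →L[ℝ] ℝ)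
    (hgradf : ∀ x y θ, gradf x y θ =
      fderiv ℝ (fun t => Real.log (π t x y)) θ
        + lam • ∑ y', (π θ x y' * sig (r x y - r x y')) •
            fderiv ℝ (fun t => Real.log (π t x y')) θ)
    (θ : Fin d → ℝ) :
    fderiv ℝ (fun t => ∑ q : X × Y, D q * Real.log (πbon t q.1 q.2)) θ
      = ∑ q : X × Y, D q • gradf q.1 q.2 θ
        - ∑ x, DX x • ∑ y, πbon θ x y • gradf x y θ := by
  set g : X → Y → (Fin d → ℝ) → ℝ := fun x y t => Real.log (π t x y) + lam * Q t x y
  have hg : ∀ x y, HasFDerivAt (g x y) (gradf x y θ) θ := by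
    intro x y
    simp only [g, hQ, hgradf]
    have hQ' := hasFDerivAt_sum_mul_const (fun y' => hdiff x y' θ) (fun y' => (hpos θ x y').ne')
      fun y' => sig (r x y - r x y')
    exact ((hdiff x y θ).log (hpos θ x y).ne').hasFDerivAt.add (hQ'.const_mul lam)
  have hbon_softmax : ∀ t x y, πbon t x y = Real.exp (g x y t) / ∑ y', Real.exp (g x y' t) := by
    intro t x y
    simp only [g, hbon, hZ, Real.exp_add, Real.exp_log (hpos _ _ _)]
  have hL := HasFDerivAt.fun_sum (u := Finset.univ) fun q _ =>
    (hasFDerivAt_log_exp_div_sum_exp (hg q.1) q.2).const_mul (D q)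
  simp only [← hbon_softmax] at hL
  rw [hL.fderiv, sum_prod_smul_sub (b := fun x => ∑ y, πbon θ x y • gradf x y θ)]
  simp only [hDX]

/-- **BoN-SFT gradient (Lemma 1).**
With `X, Y` finite, `D` a pmf on `X × Y` with marginal `DX`, a differentiable family of
conditional positive pmfs `π θ x`, verifier score `r`, sigmoid `σ(t) = 1/(1 + exp(−t))`,
`λ > 0`, `Q θ x y = ∑ y', π θ x y' * σ(r x y − r x y')`,
`Z θ x = ∑ y, π θ x y * exp (λ * Q θ x y)`, `π_bon θ x y = π θ x y * exp (λ * Q θ x y) / Z θ x`,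
and `∇f(x,y;θ) = ∇ log π θ x y + λ • ∑ y', (π θ x y' * σ(r x y − r x y')) • ∇ log π θ x y'`:
the gradient of `L(θ) = ∑_{(x,y)} D(x,y) * log π_bon θ x y` equals
`∑_{(x,y)} D(x,y) • ∇f(x,y;θ) − ∑ x, DX x • ∑ y, π_bon θ x y • ∇f(x,y;θ)`. -/
theorem stmt_6 {X Y : Type*} [Fintype X] [Fintype Y] {d : ℕ}
    (D : X × Y → ℝ) (hDnn : ∀ q, 0 ≤ D q) (hDsum : ∑ q, D q = 1)
    (DX : X → ℝ) (hDX : ∀ x, DX x = ∑ y, D (x, y))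
    (π : (Fin d → ℝ) → X → Y → ℝ)
    (hpos : ∀ θ x y, 0 < π θ x y) (hsum : ∀ θ x, ∑ y, π θ x y = 1)
    (hdiff : ∀ x y, Differentiable ℝ (fun θ => π θ x y))
    (r : X → Y → ℝ)
    (sig : ℝ → ℝ) (hsig : ∀ t, sig t = 1 / (1 + Real.exp (-t)))
    (lam : ℝ) (hlam : 0 < lam)
    (Q : (Fin d → ℝ) → X → Y → ℝ)
    (hQ : ∀ θ x y, Q θ x y = ∑ y', π θ x y' * sig (r x y - r x y'))
    (Z : (Fin d → ℝ) → X → ℝ)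
    (hZ : ∀ θ x, Z θ x = ∑ y, π θ x y * Real.exp (lam * Q θ x y))
    (πbon : (Fin d → ℝ) → X → Y → ℝ)
    (hbon : ∀ θ x y, πbon θ x y = π θ x y * Real.exp (lam * Q θ x y) / Z θ x)
    (gradf : X → Y → (Fin d → ℝ) → (Fin d → ℝ) →L[ℝ] ℝ)
    (hgradf : ∀ x y θ, gradf x y θ =
      fderiv ℝ (fun t => Real.log (π t x y)) θ
        + lam • ∑ y', (π θ x y' * sig (r x y - r x y')) •
            fderiv ℝ (fun t => Real.log (π t x y')) θ)
    (θ : Fin d → ℝ) :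
    fderiv ℝ (fun t => ∑ q : X × Y, D q * Real.log (πbon t q.1 q.2)) θ
      = ∑ q : X × Y, D q • gradf q.1 q.2 θ
        - ∑ x, DX x • ∑ y, πbon θ x y • gradf x y θ :=
  stmt_6_general D DX hDX π hpos hdiff r sig lam Q hQ Z hZ πbon hbon gradf hgradf θ
end

section
/- (BoN-RLB, Lemma 3) Let X and Y be finite types, D a pmf on X, θ ↦ π_θ(·|x) a differentiable parameterized family of positive pmfs on Y for each x ∈ X, R : X × Y → {0,1} a binary reward, and N ≥ 1 an integer. Set p_θ(x) = ∑_{y : R(x,y)=0} π_θ(y|x) and assume 0 < p_θ(x) < 1 for all θ and x. Define the closed-form BoN policy π_bon,θ(y|x) = π_θ(y|x)·p_θ(x)^{N−1} if R(x,y) = 0 and π_bon,θ(y|x) = π_θ(y|x)·(1 − p_θ(x)^N)/(1 − p_θ(x)) if R(x,y) = 1, and the weights g⁺_N(p) = N·p^{N−1}/(1 − p^N) and g⁻(p) = N·p/(1 − p). Then ∇_θ [∑_x D(x)·∑_y π_bon,θ(y|x)·R(x,y)] = ∑_x D(x)·[ g⁺_N(p_θ(x))·∑_{y : R(x,y)=1}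 π_bon,θ(y|x)·∇_θ log π_θ(y|x) + g⁻(p_θ(x))·∑_{y : R(x,y)=0} π_bon,θ(y|x)·∇_θ log π_θ(y|x) ]. -/
/-!
Under Best-of-`N` sampling the success probability is `1 - p^N`, so its gradient is
`-N p^(N-1) ∇p` with `∇p = ∑_{R=0} ∇π`. On the other side, the log-derivative trick turns
`π_bon ∇log π` into a multiple of `∇π`, the two reward classes contribute `∑_{R=1} ∇π = -∇p`
and `∑_{R=0} ∇π = ∇p`, and the weights `g⁺_N`, `g⁻` are exactly what makes the coefficients of
`∇p` add up to `-N p^(N-1)`.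
-/

open Finset

section Policy

variable {Y : Type*} [Fintype Y]

noncomputable def failureProb (R π : Y → ℝ) : ℝ :=
  ∑ y ∈ univ.filter (fun y => R y = 0), π y

noncomputable def bestOfNPolicy (N : ℕ) (R π : Y → ℝ) (y : Y) : ℝ :=
  if R y = 0 then π y * failureProb R π ^ (N - 1)
  else π y * (1 - failureProb R π ^ N) / (1 - failureProb R π)

noncomputable def bestOfNPlusWeight (N : ℕ) (q : ℝ) : ℝ := N * q ^ (N - 1) / (1 - q ^ N)

noncomputable def bestOfNMinusWeight (N : ℕ) (q : ℝ) : ℝ := N * q / (1 - q)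

theorem filter_eq_one_eq_filter_not_eq_zero {R : Y → ℝ} (hR : ∀ y, R y = 0 ∨ R y = 1) :
    univ.filter (fun y => R y = 1) = univ.filter (fun y => ¬ R y = 0) :=
  filter_congr fun y _ => by rcases hR y with h | h <;> simp [h]

theorem sum_filter_eq_one_eq_one_sub_failureProb {R π : Y → ℝ}
    (hR : ∀ y, R y = 0 ∨ R y = 1) (hsum : ∑ y, π y = 1) :
    ∑ y ∈ univ.filter (fun y => R y = 1), π y = 1 - failureProb R π := by
  rw [filter_eq_one_eq_filter_not_eq_zero hR, failureProb, ← hsum,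
    ← sum_filter_add_sum_filter_not univ (fun y => R y = 0)]
  ring

theorem sum_bestOfNPolicy_mul_reward {N : ℕ} {R π : Y → ℝ} (hR : ∀ y, R y = 0 ∨ R y = 1)
    (hsum : ∑ y, π y = 1) (hq : failureProb R π ≠ 1) :
    ∑ y, bestOfNPolicy N R π y * R y = 1 - failureProb R π ^ N := by
  have h1q : 1 - failureProb R π ≠ 0 := sub_ne_zero.mpr hq.symm
  calc ∑ y, bestOfNPolicy N R π y * R y
      = ∑ y ∈ univ.filter (fun y => R y = 1),
          π y * ((1 - failureProb R π ^ N) / (1 - failureProb R π)) := by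
        rw [sum_filter]
        refine sum_congr rfl fun y _ => ?_
        rcases hR y with h | h <;> simp [bestOfNPolicy, h, mul_div_assoc]
    _ = 1 - failureProb R π ^ N := by
        rw [← sum_mul, sum_filter_eq_one_eq_one_sub_failureProb hR hsum, mul_div_cancel₀ _ h1q]

theorem bestOfNMinusWeight_mul_sub_bestOfNPlusWeight_mul {N : ℕ} (hN : 1 ≤ N) {q : ℝ}
    (hq0 : 0 ≤ q) (hq1 : q < 1) :
    bestOfNMinusWeight N q * q ^ (N - 1) - bestOfNPlusWeight N q * ((1 - q ^ N) / (1 - q))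
      = -(N * q ^ (N - 1)) := by
  have h1q : 1 - q ≠ 0 := by linarith
  have h1qN : 1 - q ^ N ≠ 0 := by linarith [pow_lt_one₀ hq0 hq1 (by omega : N ≠ 0)]
  obtain ⟨n, rfl⟩ := Nat.exists_eq_add_of_le' hN
  simp only [bestOfNMinusWeight, bestOfNPlusWeight, Nat.add_sub_cancel] at h1qN ⊢
  field_simp
  ring

end Policy

section Gradient

variable {E Y : Type*} [NormedAddCommGroup E] [NormedSpace ℝ E] [Fintype Y]

theorem smul_fderiv_log_s8 {f : E → ℝ} {θ : E} (hf : DifferentiableAt ℝ f θ) (hfθ : f θ ≠ 0)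
    (c : ℝ) : (f θ * c) • fderiv ℝ (fun t => Real.log (f t)) θ = c • fderiv ℝ f θ := by
  rw [fderiv.log hf hfθ, smul_smul]
  congr 1
  field_simp

theorem sum_filter_not_fderiv_eq_neg {f : E → Y → ℝ} {θ : E} {c : ℝ}
    (hf : ∀ y, DifferentiableAt ℝ (fun t => f t y) θ) (hc : ∀ t, ∑ y, f t y = c)
    (P : Y → Prop) [DecidablePred P] :
    ∑ y ∈ univ.filter (fun y => ¬ P y), fderiv ℝ (fun t => f t y) θ
      = -∑ y ∈ univ.filter P, fderiv ℝ (fun t => f t y) θ := by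
  have hsum : HasFDerivAt (fun t => ∑ y, f t y) (∑ y, fderiv ℝ (fun t => f t y) θ) θ :=
    HasFDerivAt.fun_sum fun y _ => (hf y).hasFDerivAt
  have hzero : ∑ y, fderiv ℝ (fun t => f t y) θ = 0 := by
    rw [show (fun t => ∑ y, f t y) = fun _ => c from funext hc] at hsum
    exact hsum.unique (hasFDerivAt_const c θ)
  rw [← sum_filter_add_sum_filter_not univ P] at hzero
  exact eq_neg_of_add_eq_zero_right hzero

theorem hasFDerivAt_failureProb {π : E → Y → ℝ} {θ : E} (R : Y → ℝ)
    (hdiff : ∀ y, DifferentiableAt ℝ (fun t => π t y) θ) :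
    HasFDerivAt (fun t => failureProb R (π t))
      (∑ y ∈ univ.filter (fun y => R y = 0), fderiv ℝ (fun t => π t y) θ) θ :=
  HasFDerivAt.fun_sum fun y _ => (hdiff y).hasFDerivAt

theorem hasFDerivAt_sum_bestOfNPolicy_mul_reward {π : E → Y → ℝ} {θ : E} {R : Y → ℝ} {N : ℕ}
    (hpos : ∀ y, 0 < π θ y) (hsum : ∀ t, ∑ y, π t y = 1)
    (hdiff : ∀ y, DifferentiableAt ℝ (fun t => π t y) θ) (hR : ∀ y, R y = 0 ∨ R y = 1)
    (hN : 1 ≤ N) (hq : ∀ t, failureProb R (π t) < 1) :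
    HasFDerivAt (fun t => ∑ y, bestOfNPolicy N R (π t) y * R y)
      (bestOfNPlusWeight N (failureProb R (π θ)) •
          ∑ y ∈ univ.filter (fun y => R y = 1),
            bestOfNPolicy N R (π θ) y • fderiv ℝ (fun t => Real.log (π t y)) θ
        + bestOfNMinusWeight N (failureProb R (π θ)) •
          ∑ y ∈ univ.filter (fun y => R y = 0),
            bestOfNPolicy N R (π θ) y • fderiv ℝ (fun t => Real.log (π t y)) θ) θ := by
  set q := failureProb R (π θ)
  set dq := ∑ y ∈ univ.filter (fun y => R y = 0), fderiv ℝ (fun t => π t y) θ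
  have hsuccess : HasFDerivAt (fun t => 1 - failureProb R (π t) ^ N)
      (-((N * q ^ (N - 1)) • dq)) θ :=
    ((hasDerivAt_pow N q).comp_hasFDerivAt θ (hasFDerivAt_failureProb R hdiff)).const_sub 1
  have hsuccess_sum : (fun t => ∑ y, bestOfNPolicy N R (π t) y * R y)
      = fun t => 1 - failureProb R (π t) ^ N :=
    funext fun t => sum_bestOfNPolicy_mul_reward hR (hsum t) (hq t).ne
  have hplus : ∑ y ∈ univ.filter (fun y => R y = 1),
      bestOfNPolicy N R (π θ) y • fderiv ℝ (fun t => Real.log (π t y)) θ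
        = ((1 - q ^ N) / (1 - q)) • -dq := by
    rw [filter_eq_one_eq_filter_not_eq_zero hR,
      ← sum_filter_not_fderiv_eq_neg hdiff hsum (fun y => R y = 0), smul_sum]
    refine sum_congr rfl fun y hy => ?_
    rw [bestOfNPolicy, if_neg (mem_filter.mp hy).2, mul_div_assoc]
    exact smul_fderiv_log_s8 (hdiff y) (hpos y).ne' _
  have hminus : ∑ y ∈ univ.filter (fun y => R y = 0),
      bestOfNPolicy N R (π θ) y • fderiv ℝ (fun t => Real.log (π t y)) θ = q ^ (N - 1) • dq := by
    rw [smul_sum]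
    refine sum_congr rfl fun y hy => ?_
    rw [bestOfNPolicy, if_pos (mem_filter.mp hy).2]
    exact smul_fderiv_log_s8 (hdiff y) (hpos y).ne' _
  have hq0 : 0 ≤ q := sum_nonneg fun y _ => (hpos y).le
  rw [hsuccess_sum, hplus, hminus]
  convert hsuccess using 1
  rw [← neg_smul, ← bestOfNMinusWeight_mul_sub_bestOfNPlusWeight_mul hN hq0 (hq θ)]
  module

end Gradient

theorem stmt_8_general {X Y : Type*} [Fintype X] [Fintype Y] {d : ℕ}
    (D : X → ℝ)
    (π : (Fin d → ℝ) → X → Y → ℝ)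
    (hpos : ∀ θ x y, 0 < π θ x y) (hsum : ∀ θ x, ∑ y, π θ x y = 1)
    (hdiff : ∀ x y, Differentiable ℝ (fun θ => π θ x y))
    (R : X → Y → ℝ) (hR : ∀ x y, R x y = 0 ∨ R x y = 1)
    (N : ℕ) (hN : 1 ≤ N)
    (p : (Fin d → ℝ) → X → ℝ)
    (hp : ∀ θ x, p θ x = ∑ y ∈ Finset.univ.filter (fun y => R x y = 0), π θ x y)
    (hp01 : ∀ θ x, 0 < p θ x ∧ p θ x < 1)
    (πbon : (Fin d → ℝ) → X → Y → ℝ)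
    (hbon : ∀ θ x y, πbon θ x y =
      if R x y = 0 then π θ x y * (p θ x) ^ (N - 1)
      else π θ x y * (1 - (p θ x) ^ N) / (1 - p θ x))
    (gplus : ℝ → ℝ) (hgplus : ∀ q, gplus q = N * q ^ (N - 1) / (1 - q ^ N))
    (gminus : ℝ → ℝ) (hgminus : ∀ q, gminus q = N * q / (1 - q))
    (θ : Fin d → ℝ) :
    fderiv ℝ (fun t => ∑ x, D x * ∑ y, πbon t x y * R x y) θ
      = ∑ x, D x •
          (gplus (p θ x) • ∑ y ∈ Finset.univ.filter (fun y => R x y = 1),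
              πbon θ x y • fderiv ℝ (fun t => Real.log (π t x y)) θ
            + gminus (p θ x) • ∑ y ∈ Finset.univ.filter (fun y => R x y = 0),
                πbon θ x y • fderiv ℝ (fun t => Real.log (π t x y)) θ) := by
  obtain rfl : p = fun t x => failureProb (R x) (π t x) := funext₂ hp
  obtain rfl : πbon = fun t x => bestOfNPolicy N (R x) (π t x) :=
    funext₂ fun t x => funext (hbon t x)
  obtain rfl : gplus = bestOfNPlusWeight N := funext hgplus
  obtain rfl : gminus = bestOfNMinusWeight N := funext hgminus
  exact (HasFDerivAt.fun_sum fun x _ =>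
    (hasFDerivAt_sum_bestOfNPolicy_mul_reward (π := fun t => π t x) (hpos θ x) (hsum · x) (fun y => (hdiff x y) θ)
      (hR x) hN (fun t => (hp01 t x).2)).const_mul (D x)).fderiv

/-- **BoN-RLB gradient (Lemma 3).**
With `X, Y` finite, `D` a pmf on `X`, a differentiable family of conditional positive pmfs
`π θ x`, a binary reward `R : X × Y → {0,1}`, `N ≥ 1`, failure probability
`p θ x = ∑_{y : R x y = 0} π θ x y ∈ (0,1)`, the closed-form Best-of-N policy
`π_bon θ x y = π θ x y * (p θ x)^(N−1)` if `R x y = 0` and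
`π_bon θ x y = π θ x y * (1 − (p θ x)^N)/(1 − p θ x)` if `R x y = 1`, and weights
`g⁺_N(q) = N * q^(N−1)/(1 − q^N)`, `g⁻(q) = N * q/(1 − q)`:
`∇ ∑ x, D x * ∑ y, π_bon θ x y * R x y
  = ∑ x, D x • (g⁺_N(p θ x) • ∑_{y : R x y = 1} π_bon θ x y • ∇ log π θ x y
      + g⁻(p θ x) • ∑_{y : R x y = 0} π_bon θ x y • ∇ log π θ x y)`. -/
theorem stmt_8 {X Y : Type*} [Fintype X] [Fintype Y] {d : ℕ}
    (D : X → ℝ) (hDnn : ∀ x, 0 ≤ D x) (hDsum : ∑ x, D x = 1)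
    (π : (Fin d → ℝ) → X → Y → ℝ)
    (hpos : ∀ θ x y, 0 < π θ x y) (hsum : ∀ θ x, ∑ y, π θ x y = 1)
    (hdiff : ∀ x y, Differentiable ℝ (fun θ => π θ x y))
    (R : X → Y → ℝ) (hR : ∀ x y, R x y = 0 ∨ R x y = 1)
    (N : ℕ) (hN : 1 ≤ N)
    (p : (Fin d → ℝ) → X → ℝ)
    (hp : ∀ θ x, p θ x = ∑ y ∈ Finset.univ.filter (fun y => R x y = 0), π θ x y)
    (hp01 : ∀ θ x, 0 < p θ x ∧ p θ x < 1)
    (πbon : (Fin d → ℝ) → X → Y → ℝ)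
    (hbon : ∀ θ x y, πbon θ x y =
      if R x y = 0 then π θ x y * (p θ x) ^ (N - 1)
      else π θ x y * (1 - (p θ x) ^ N) / (1 - p θ x))
    (gplus : ℝ → ℝ) (hgplus : ∀ q, gplus q = N * q ^ (N - 1) / (1 - q ^ N))
    (gminus : ℝ → ℝ) (hgminus : ∀ q, gminus q = N * q / (1 - q))
    (θ : Fin d → ℝ) :
    fderiv ℝ (fun t => ∑ x, D x * ∑ y, πbon t x y * R x y) θ
      = ∑ x, D x •
          (gplus (p θ x) • ∑ y ∈ Finset.univ.filter (fun y => R x y = 1),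
              πbon θ x y • fderiv ℝ (fun t => Real.log (π t x y)) θ
            + gminus (p θ x) • ∑ y ∈ Finset.univ.filter (fun y => R x y = 0),
                πbon θ x y • fderiv ℝ (fun t => Real.log (π t x y)) θ) :=
  stmt_8_general D π hpos hsum hdiff R hR N hN p hp hp01 πbon hbon gplus hgplus gminus hgminus θ
end

section
/- (BoN-RLB(P), Corollary 1) Let X and Y be finite types, D a pmf on X, θ ↦ π_θ(·|x) a differentiable parameterized family of positive pmfs on Y for each x ∈ X, R : X × Y → {0,1} a binary reward, and N ≥ 1 an integer. Set p_θ(x) = ∑_{y : R(x,y)=0} π_θ(y|x) and assume 0 < p_θ(x) < 1 for all θ and x. Define the closed-form BoN policy π_bon,θ(y|x) = π_θ(y|x)·p_θ(x)^{N−1} if R(x,y) = 0 and π_bon,θ(y|x) = π_θ(y|x)·(1 − p_θ(x)^N)/(1 − p_θ(x)) if R(x,y) = 1, and the positive-only weight ḡ⁺_N(p) = N·p^{N−1}·(1 − p)/(1 − p^N). Then ∇_θ [∑_x D(x)·∑_y π_bon,θ(y|x)·R(x,y)] = ∑_x D(x)·ḡ⁺_N(p_θ(x))·∑_{y : R(x,y)=1}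 π_bon,θ(y|x)·∇_θ log π_θ(y|x). -/
/-!
On the successful responses the Best-of-`N` policy is the base policy rescaled by
`c = (1 - p^N) / (1 - p)`, so its success probability is `c (1 - p) = 1 - p^N` and the objective
has gradient `-∑ₓ D(x) N p^(N-1) ∇p`. On the other side `π_bon ∇log π = c ∇π` on successes, and
`∑_{R=1} ∇π = ∇(1 - p) = -∇p`; the weight `ḡ⁺_N(p)` is exactly `N p^(N-1) / c`.
-/

open Finset

section BinaryReward

variable {Y : Type*} [Fintype Y] {r : Y → ℝ}

theorem sum_mul_binary_eq_sum_filter (hr : ∀ y, r y = 0 ∨ r y = 1) (f : Y → ℝ) :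
    ∑ y, f y * r y = ∑ y ∈ univ.filter (fun y => r y = 1), f y := by
  rw [sum_filter]
  refine sum_congr rfl fun y _ => ?_
  rcases hr y with h | h <;> simp [h]

theorem sum_filter_eq_one_eq_sub {M : Type*} [AddCommGroup M] (hr : ∀ y, r y = 0 ∨ r y = 1)
    (f : Y → M) :
    ∑ y ∈ univ.filter (fun y => r y = 1), f y
      = ∑ y, f y - ∑ y ∈ univ.filter (fun y => r y = 0), f y := by
  have hfilter : univ.filter (fun y => r y = 1) = univ.filter (fun y => ¬r y = 0) :=
    filter_congr fun y _ => by rcases hr y with h | h <;> simp [h]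
  rw [hfilter, eq_sub_iff_add_eq, add_comm, sum_filter_add_sum_filter_not]

end BinaryReward

section BestOfN

variable {E Y : Type*} [NormedAddCommGroup E] [NormedSpace ℝ E] [Fintype Y] {r : Y → ℝ}

theorem sum_mul_reward_of_eq_mul_on_success (hr : ∀ y, r y = 0 ∨ r y = 1) {π : Y → ℝ}
    (hsum : ∑ y, π y = 1) {p : ℝ} (hp : p = ∑ y ∈ univ.filter (fun y => r y = 0), π y)
    {c : ℝ} {πbon : Y → ℝ} (hbon : ∀ y, r y = 1 → πbon y = c * π y) :
    ∑ y, πbon y * r y = c * (1 - p) := by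
  rw [sum_mul_binary_eq_sum_filter hr, sum_congr rfl fun y hy => hbon y (mem_filter.1 hy).2,
    ← mul_sum, sum_filter_eq_one_eq_sub hr, hsum, hp]

theorem sum_filter_fderiv_eq_neg_fderiv_failure (hr : ∀ y, r y = 0 ∨ r y = 1)
    {π : E → Y → ℝ} {θ : E} (hsum : ∀ t, ∑ y, π t y = 1)
    (hdiff : ∀ y, DifferentiableAt ℝ (fun t => π t y) θ) {p : E → ℝ}
    (hp : ∀ t, p t = ∑ y ∈ univ.filter (fun y => r y = 0), π t y) :
    ∑ y ∈ univ.filter (fun y => r y = 1), fderiv ℝ (fun t => π t y) θ = -fderiv ℝ p θ := by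
  have hsuccess : (fun t => ∑ y ∈ univ.filter (fun y => r y = 1), π t y) = fun t => 1 - p t :=
    funext fun t => by rw [sum_filter_eq_one_eq_sub hr, hsum, hp]
  rw [← fderiv_fun_sum fun y _ => hdiff y, hsuccess, fderiv_const_sub]

theorem sum_filter_smul_fderiv_log_of_eq_mul_on_success (hr : ∀ y, r y = 0 ∨ r y = 1)
    {π : E → Y → ℝ} {θ : E} (hne : ∀ y, π θ y ≠ 0) (hsum : ∀ t, ∑ y, π t y = 1)
    (hdiff : ∀ y, DifferentiableAt ℝ (fun t => π t y) θ) {p : E → ℝ}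
    (hp : ∀ t, p t = ∑ y ∈ univ.filter (fun y => r y = 0), π t y)
    {c : ℝ} {πbon : Y → ℝ} (hbon : ∀ y, r y = 1 → πbon y = c * π θ y) :
    ∑ y ∈ univ.filter (fun y => r y = 1), πbon y • fderiv ℝ (fun t => Real.log (π t y)) θ
      = c • -fderiv ℝ p θ := by
  calc ∑ y ∈ univ.filter (fun y => r y = 1), πbon y • fderiv ℝ (fun t => Real.log (π t y)) θ
      = ∑ y ∈ univ.filter (fun y => r y = 1), c • fderiv ℝ (fun t => π t y) θ := by
        refine sum_congr rfl fun y hy => ?_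
        rw [hbon y (mem_filter.1 hy).2, fderiv.log (hdiff y) (hne y), smul_smul,
          mul_inv_cancel_right₀ (hne y)]
    _ = c • -fderiv ℝ p θ := by
        rw [← smul_sum, sum_filter_fderiv_eq_neg_fderiv_failure hr hsum hdiff hp]

end BestOfN

theorem mul_one_sub_div_one_sub_pow_mul_div_one_sub (a : ℝ) {q : ℝ} (hq0 : 0 ≤ q) (hq1 : q < 1)
    {N : ℕ} (hN : N ≠ 0) : a * (1 - q) / (1 - q ^ N) * ((1 - q ^ N) / (1 - q)) = a := by
  have hqN : q ^ N < 1 := pow_lt_one₀ hq0 hq1 hN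
  field_simp [(sub_pos.2 hq1).ne', (sub_pos.2 hqN).ne']

theorem stmt_9_general {X Y : Type*} [Fintype X] [Fintype Y] {d : ℕ}
    (D : X → ℝ)
    (π : (Fin d → ℝ) → X → Y → ℝ)
    (hpos : ∀ θ x y, 0 < π θ x y) (hsum : ∀ θ x, ∑ y, π θ x y = 1)
    (hdiff : ∀ x y, Differentiable ℝ (fun θ => π θ x y))
    (R : X → Y → ℝ) (hR : ∀ x y, R x y = 0 ∨ R x y = 1)
    (N : ℕ) (hN : 1 ≤ N)
    (p : (Fin d → ℝ) → X → ℝ)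
    (hp : ∀ θ x, p θ x = ∑ y ∈ Finset.univ.filter (fun y => R x y = 0), π θ x y)
    (hp01 : ∀ θ x, 0 < p θ x ∧ p θ x < 1)
    (πbon : (Fin d → ℝ) → X → Y → ℝ)
    (hbon : ∀ θ x y, πbon θ x y =
      if R x y = 0 then π θ x y * (p θ x) ^ (N - 1)
      else π θ x y * (1 - (p θ x) ^ N) / (1 - p θ x))
    (gbar : ℝ → ℝ)
    (hgbar : ∀ q, gbar q = N * q ^ (N - 1) * (1 - q) / (1 - q ^ N))
    (θ : Fin d → ℝ) :
    fderiv ℝ (fun t => ∑ x, D x * ∑ y, πbon t x y * R x y) θ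
      = ∑ x, D x • gbar (p θ x) •
          ∑ y ∈ Finset.univ.filter (fun y => R x y = 1),
            πbon θ x y • fderiv ℝ (fun t => Real.log (π t x y)) θ := by
  have hbon_success : ∀ t x y, R x y = 1 →
      πbon t x y = (1 - p t x ^ N) / (1 - p t x) * π t x y := fun t x y h => by
    rw [hbon, if_neg (by simp [h]), mul_div_assoc, mul_comm]
  have hpdiff : ∀ x, Differentiable ℝ (fun t => p t x) := fun x => by
    simp only [hp]
    exact Differentiable.fun_sum fun y _ => hdiff x y
  have hobj : (fun t => ∑ x, D x * ∑ y, πbon t x y * R x y)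
      = fun t => ∑ x, D x * (1 - p t x ^ N) := funext fun t => sum_congr rfl fun x _ => by
    rw [sum_mul_reward_of_eq_mul_on_success (hR x) (hsum t x) (hp t x) (hbon_success t x),
      div_mul_cancel₀ _ (sub_pos.2 (hp01 t x).2).ne']
  rw [hobj, fderiv_fun_sum fun x _ => (((hpdiff x θ).fun_pow N).const_sub 1).const_mul (D x)]
  refine sum_congr rfl fun x _ => ?_
  rw [fderiv_const_mul (((hpdiff x θ).fun_pow N).const_sub 1), fderiv_const_sub,
    fderiv_fun_pow _ (hpdiff x θ),
    sum_filter_smul_fderiv_log_of_eq_mul_on_success (π := fun t y => π t x y) (hR x)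
      (fun y => (hpos θ x y).ne') (hsum · x)
      (fun y => (hdiff x y).differentiableAt) (hp · x) (hbon_success θ x),
    smul_smul (gbar _), hgbar,
    mul_one_sub_div_one_sub_pow_mul_div_one_sub _ (hp01 θ x).1.le (hp01 θ x).2 (by omega),
    nsmul_eq_mul]
  simp only [smul_neg]

/-- **BoN-RLB(P) positive-only gradient (Corollary 1).**
With `X, Y` finite, `D` a pmf on `X`, a differentiable family of conditional positive pmfs
`π θ x`, a binary reward `R : X × Y → {0,1}`, `N ≥ 1`, failure probability
`p θ x = ∑_{y : R x y = 0} π θ x y ∈ (0,1)`, the closed-form Best-of-N policy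
`π_bon θ x y = π θ x y * (p θ x)^(N−1)` if `R x y = 0` and
`π_bon θ x y = π θ x y * (1 − (p θ x)^N)/(1 − p θ x)` if `R x y = 1`, and positive-only weight
`ḡ⁺_N(q) = N * q^(N−1) * (1 − q)/(1 − q^N)`:
`∇ ∑ x, D x * ∑ y, π_bon θ x y * R x y
  = ∑ x, D x • ḡ⁺_N(p θ x) • ∑_{y : R x y = 1} π_bon θ x y • ∇ log π θ x y`. -/
theorem stmt_9 {X Y : Type*} [Fintype X] [Fintype Y] {d : ℕ}
    (D : X → ℝ) (hDnn : ∀ x, 0 ≤ D x) (hDsum : ∑ x, D x = 1)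
    (π : (Fin d → ℝ) → X → Y → ℝ)
    (hpos : ∀ θ x y, 0 < π θ x y) (hsum : ∀ θ x, ∑ y, π θ x y = 1)
    (hdiff : ∀ x y, Differentiable ℝ (fun θ => π θ x y))
    (R : X → Y → ℝ) (hR : ∀ x y, R x y = 0 ∨ R x y = 1)
    (N : ℕ) (hN : 1 ≤ N)
    (p : (Fin d → ℝ) → X → ℝ)
    (hp : ∀ θ x, p θ x = ∑ y ∈ Finset.univ.filter (fun y => R x y = 0), π θ x y)
    (hp01 : ∀ θ x, 0 < p θ x ∧ p θ x < 1)
    (πbon : (Fin d → ℝ) → X → Y → ℝ)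
    (hbon : ∀ θ x y, πbon θ x y =
      if R x y = 0 then π θ x y * (p θ x) ^ (N - 1)
      else π θ x y * (1 - (p θ x) ^ N) / (1 - p θ x))
    (gbar : ℝ → ℝ)
    (hgbar : ∀ q, gbar q = N * q ^ (N - 1) * (1 - q) / (1 - q ^ N))
    (θ : Fin d → ℝ) :
    fderiv ℝ (fun t => ∑ x, D x * ∑ y, πbon t x y * R x y) θ
      = ∑ x, D x • gbar (p θ x) •
          ∑ y ∈ Finset.univ.filter (fun y => R x y = 1),
            πbon θ x y • fderiv ℝ (fun t => Real.log (π t x y)) θ :=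
  stmt_9_general D π hpos hsum hdiff R hR N hN p hp hp01 πbon hbon gbar hgbar θ
end

section
/- For every integer N ≥ 1, the positive-only weight ḡ⁺_N(p) = N·p^{N−1}·(1 − p)/(1 − p^N), defined for p ∈ (0,1), satisfies 0 < ḡ⁺_N(p) ≤ 1 for all p ∈ (0,1) and is monotonically non-decreasing on (0,1); for N ≥ 2 it is strictly increasing on (0,1) and satisfies ḡ⁺_N(p) < 1, with ḡ⁺_N(p) → 1 as p → 1⁻. (In particular ḡ⁺_N(p) = N / (∑_{j=0}^{N−1} p^{−j}).) -/
/-- The positive-only BoN-RLB(P) weight `ḡ⁺_N(p) = N·p^(N−1)·(1−p)/(1−p^N)`. -/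
noncomputable def gbarPlus (N : ℕ) (p : ℝ) : ℝ :=
  N * p ^ (N - 1) * (1 - p) / (1 - p ^ N)

/-! Dividing numerator and denominator of `ḡ⁺_N(p)` by `(1 - p) p^(N-1)` gives
`ḡ⁺_N(p) = N / G_N(1/p)` with `G_N(x) = ∑_{j<N} x^j`. On `(0,1)` we have `1/p > 1`, and `G_N`
is increasing on `[0, ∞)` (strictly so for `N ≥ 2`) with `G_N(1) = N`; this gives the bounds
and the monotonicity, and continuity of `G_N` at `1` gives the limit. -/

open Finset Set Filter Topology

section GeomSum

variable {R : Type*} [Semiring R] [LinearOrder R] [IsStrictOrderedRing R]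

theorem geom_sum_monotoneOn (n : ℕ) :
    MonotoneOn (fun x : R => ∑ i ∈ range n, x ^ i) (Ici 0) := fun _ hx _ _ hxy =>
  sum_le_sum fun i _ => pow_le_pow_left₀ hx hxy i

theorem geom_sum_strictMonoOn {n : ℕ} (hn : 2 ≤ n) :
    StrictMonoOn (fun x : R => ∑ i ∈ range n, x ^ i) (Ici 0) := fun _ hx _ _ hxy =>
  sum_lt_sum (fun i _ => pow_le_pow_left₀ hx hxy.le i)
    ⟨1, mem_range.mpr (by omega), by simpa using hxy⟩

end GeomSum

theorem gbarPlus_eq_div_geom_sum_inv (N : ℕ) {p : ℝ} (hp0 : p ≠ 0) (hp1 : p ≠ 1) :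
    gbarPlus N p = N / ∑ j ∈ range N, p⁻¹ ^ j := by
  have hreflect : ∑ i ∈ range N, p ^ i = p ^ (N - 1) * ∑ j ∈ range N, p⁻¹ ^ j := by
    rw [mul_sum, ← sum_range_reflect]
    refine sum_congr rfl fun j hj => ?_
    rw [inv_pow, ← pow_sub₀ p hp0 (Nat.le_sub_one_of_lt (mem_range.mp hj))]
  have hfactor : p ^ (N - 1) * (1 - p) ≠ 0 :=
    mul_ne_zero (pow_ne_zero _ hp0) (sub_ne_zero.mpr hp1.symm)
  rw [gbarPlus, ← mul_neg_geom_sum, hreflect, ← mul_div_mul_left (N : ℝ) _ hfactor]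
  congr 1 <;> ring

section InverseGeomSum

variable {N : ℕ} {p q : ℝ}

theorem geom_sum_inv_le_geom_sum_inv (hp : 0 < p) (hpq : p ≤ q) :
    ∑ j ∈ range N, q⁻¹ ^ j ≤ ∑ j ∈ range N, p⁻¹ ^ j :=
  geom_sum_monotoneOn N (inv_pos.mpr (hp.trans_le hpq)).le (inv_pos.mpr hp).le
    (inv_anti₀ hp hpq)

theorem geom_sum_inv_lt_geom_sum_inv (hN : 2 ≤ N) (hp : 0 < p) (hpq : p < q) :
    ∑ j ∈ range N, q⁻¹ ^ j < ∑ j ∈ range N, p⁻¹ ^ j :=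
  geom_sum_strictMonoOn hN (inv_pos.mpr (hp.trans hpq)).le (inv_pos.mpr hp).le
    (inv_strictAnti₀ hp hpq)

theorem natCast_le_geom_sum_inv (hp : 0 < p) (hp1 : p ≤ 1) :
    (N : ℝ) ≤ ∑ j ∈ range N, p⁻¹ ^ j := by
  simpa using geom_sum_inv_le_geom_sum_inv (N := N) hp hp1

theorem natCast_lt_geom_sum_inv (hN : 2 ≤ N) (hp : 0 < p) (hp1 : p < 1) :
    (N : ℝ) < ∑ j ∈ range N, p⁻¹ ^ j := by
  simpa using geom_sum_inv_lt_geom_sum_inv hN hp hp1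

end InverseGeomSum

section UnitInterval

variable {N : ℕ} {p : ℝ}

theorem gbarPlus_pos (hN : N ≠ 0) (hp : p ∈ Ioo (0 : ℝ) 1) : 0 < gbarPlus N p := by
  rw [gbarPlus_eq_div_geom_sum_inv N hp.1.ne' hp.2.ne]
  have := geom_sum_pos (inv_pos.mpr hp.1).le hN
  positivity

theorem gbarPlus_le_one (hp : p ∈ Ioo (0 : ℝ) 1) : gbarPlus N p ≤ 1 := by
  rw [gbarPlus_eq_div_geom_sum_inv N hp.1.ne' hp.2.ne]
  have hle := natCast_le_geom_sum_inv (N := N) hp.1 hp.2.le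
  exact div_le_one_of_le₀ hle (N.cast_nonneg.trans hle)

theorem gbarPlus_lt_one (hN : 2 ≤ N) (hp : p ∈ Ioo (0 : ℝ) 1) : gbarPlus N p < 1 := by
  rw [gbarPlus_eq_div_geom_sum_inv N hp.1.ne' hp.2.ne]
  have hlt := natCast_lt_geom_sum_inv hN hp.1 hp.2
  exact (div_lt_one (N.cast_nonneg.trans_lt hlt)).mpr hlt

theorem gbarPlus_monotoneOn (hN : N ≠ 0) : MonotoneOn (gbarPlus N) (Ioo 0 1) := by
  intro p hp q hq hpq
  rw [gbarPlus_eq_div_geom_sum_inv N hp.1.ne' hp.2.ne,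
    gbarPlus_eq_div_geom_sum_inv N hq.1.ne' hq.2.ne]
  exact div_le_div_of_nonneg_left N.cast_nonneg (geom_sum_pos (inv_pos.mpr hq.1).le hN)
    (geom_sum_inv_le_geom_sum_inv hp.1 hpq)

theorem gbarPlus_strictMonoOn (hN : 2 ≤ N) : StrictMonoOn (gbarPlus N) (Ioo 0 1) := by
  intro p hp q hq hpq
  rw [gbarPlus_eq_div_geom_sum_inv N hp.1.ne' hp.2.ne,
    gbarPlus_eq_div_geom_sum_inv N hq.1.ne' hq.2.ne]
  exact div_lt_div_of_pos_left (by positivity)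
    (geom_sum_pos (inv_pos.mpr hq.1).le (by omega)) (geom_sum_inv_lt_geom_sum_inv hN hp.1 hpq)

end UnitInterval

theorem tendsto_gbarPlus_one {N : ℕ} (hN : N ≠ 0) : Tendsto (gbarPlus N) (𝓝[≠] 1) (𝓝 1) := by
  have hcont : ContinuousAt (fun p : ℝ => (N : ℝ) / ∑ j ∈ range N, p⁻¹ ^ j) 1 := by
    refine continuousAt_const.div
      (tendsto_finsetSum _ fun j _ => (continuousAt_inv₀ one_ne_zero).pow j) ?_
    simpa using hN
  have hlim :
      Tendsto (fun p : ℝ => (N : ℝ) / ∑ j ∈ range N, p⁻¹ ^ j) (𝓝[≠] 1) (𝓝 1) := by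
    convert hcont.tendsto.mono_left nhdsWithin_le_nhds using 2
    simp [hN]
  refine hlim.congr' ?_
  filter_upwards [self_mem_nhdsWithin,
    nhdsWithin_le_nhds (eventually_ne_nhds one_ne_zero)] with p hp1 hp0
  exact (gbarPlus_eq_div_geom_sum_inv N hp0 hp1).symm

/-- **Properties of the positive-only weight `ḡ⁺_N`.**
For every integer `N ≥ 1`: on `(0,1)`, `0 < ḡ⁺_N(p) ≤ 1` and `ḡ⁺_N` is monotonically
non-decreasing; for `N ≥ 2` it is strictly increasing on `(0,1)`, satisfies `ḡ⁺_N(p) < 1`,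
and `ḡ⁺_N(p) → 1` as `p → 1⁻`.  In particular `ḡ⁺_N(p) = N / ∑_{j=0}^{N−1} p^{−j}`. -/
theorem stmt_10 (N : ℕ) (hN : 1 ≤ N) :
    (∀ p ∈ Set.Ioo (0 : ℝ) 1, 0 < gbarPlus N p ∧ gbarPlus N p ≤ 1) ∧
    (∀ p ∈ Set.Ioo (0 : ℝ) 1, ∀ q ∈ Set.Ioo (0 : ℝ) 1, p ≤ q →
      gbarPlus N p ≤ gbarPlus N q) ∧
    (2 ≤ N →
      StrictMonoOn (gbarPlus N) (Set.Ioo (0 : ℝ) 1) ∧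
      (∀ p ∈ Set.Ioo (0 : ℝ) 1, gbarPlus N p < 1) ∧
      Filter.Tendsto (gbarPlus N) (nhdsWithin 1 (Set.Iio 1)) (nhds 1)) ∧
    (∀ p ∈ Set.Ioo (0 : ℝ) 1,
      gbarPlus N p = N / ∑ j ∈ Finset.range N, p ^ (-(j : ℤ))) := by
  have hN0 : N ≠ 0 := by omega
  refine ⟨fun p hp => ⟨gbarPlus_pos hN0 hp, gbarPlus_le_one hp⟩,
    gbarPlus_monotoneOn hN0,
    fun hN2 => ⟨gbarPlus_strictMonoOn hN2, fun p hp => gbarPlus_lt_one hN2 hp,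
      (tendsto_gbarPlus_one hN0).mono_left (nhdsWithin_mono _ fun p hp => ne_of_lt hp)⟩,
    fun p hp => ?_⟩
  simp only [gbarPlus_eq_div_geom_sum_inv N hp.1.ne' hp.2.ne, zpow_neg, zpow_natCast, inv_pow]
end

section
/- For every real N ≥ 1 there exists a unique λ_N > 0 satisfying (λ_N − 1)·exp(λ_N + 1)/exp(λ_N − 1) − log((exp(λ_N) − 1)/λ_N) = log N − (N − 1)/N, and the map N ↦ λ_N is strictly increasing on [1, ∞). -/
/-!
On `(0, ∞)` the left-hand side simplifies to `h(λ) = (λ - 1) e² - log (e^λ - 1) + log λ`, whose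
derivative `e² - 1 - 1/(e^λ - 1) + 1/λ` is positive because `e^λ - 1 > λ`. Being continuous, with
limit `-e²` at `0⁺` and `+∞` at `∞`, `h` is a bijection from `(0, ∞)` onto `(-e², ∞)`. The
right-hand side `log N - (N - 1)/N` is strictly increasing on `[1, ∞)` (its derivative is
`(N - 1)/N²`) and vanishes at `N = 1`, so it lies in `[0, ∞) ⊆ (-e², ∞)`, and `N ↦ λ_N` is the
composite of two strictly increasing maps.
-/

/-- The left-hand side of the defining equation of the Best-of-N variational
coefficient `λ_N`: `h(λ) = (λ − 1)·exp(λ + 1)/exp(λ − 1) − log((exp λ − 1)/λ)`. -/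
noncomputable def bonH (l : ℝ) : ℝ :=
  (l - 1) * Real.exp (l + 1) / Real.exp (l - 1) - Real.log ((Real.exp l - 1) / l)

open Real Set Filter Topology

lemma bonH_eq (l : ℝ) : bonH l = (l - 1) * exp 2 - log ((exp l - 1) / l) := by
  have hexp : exp (l + 1) = exp (l - 1) * exp 2 := by rw [← exp_add]; ring_nf
  rw [bonH, hexp, mul_div_assoc, mul_div_cancel_left₀ _ (exp_ne_zero _)]

lemma bonH_eq_of_pos {l : ℝ} (hl : 0 < l) :
    bonH l = (l - 1) * exp 2 - log (exp l - 1) + log l := by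
  rw [bonH_eq, log_div (sub_pos.2 (one_lt_exp_iff.2 hl)).ne' hl.ne']
  ring

lemma hasDerivAt_bonH {x : ℝ} (hx : 0 < x) :
    HasDerivAt bonH (exp 2 - exp x / (exp x - 1) + x⁻¹) x := by
  have hpos : bonH =ᶠ[𝓝 x] fun l => (l - 1) * exp 2 - log (exp l - 1) + log l :=
    (lt_mem_nhds hx).mono fun _ hl => bonH_eq_of_pos hl
  have hlin : HasDerivAt (fun l => (l - 1) * exp 2) (1 * exp 2) x :=
    ((hasDerivAt_id x).sub_const 1).mul_const _
  have hlog : HasDerivAt (fun l => log (exp l - 1)) (exp x / (exp x - 1)) x :=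
    ((hasDerivAt_exp x).sub_const 1).log (sub_pos.2 (one_lt_exp_iff.2 hx)).ne'
  rw [← one_mul (exp 2)]
  exact ((hlin.sub hlog).add (hasDerivAt_log hx.ne')).congr_of_eventuallyEq hpos

lemma continuousOn_bonH : ContinuousOn bonH (Ioi 0) := fun _ hx =>
  (hasDerivAt_bonH hx).continuousAt.continuousWithinAt

lemma strictMonoOn_bonH : StrictMonoOn bonH (Ioi 0) := by
  refine strictMonoOn_of_deriv_pos (convex_Ioi 0) continuousOn_bonH fun x hx => ?_
  rw [interior_Ioi] at hx
  have hx : 0 < x := hx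
  rw [(hasDerivAt_bonH hx).deriv]
  have hgap : x < exp x - 1 := by linarith [add_one_lt_exp hx.ne']
  have hsplit : exp x / (exp x - 1) = 1 + (exp x - 1)⁻¹ := by
    field_simp [(hx.trans hgap).ne']
    ring
  have hinv : (exp x - 1)⁻¹ < x⁻¹ := inv_strictAnti₀ hx hgap
  have he2 : 1 < exp 2 := one_lt_exp_iff.2 two_pos
  rw [hsplit]
  linarith

lemma tendsto_bonH_nhdsGT_zero : Tendsto bonH (𝓝[>] 0) (𝓝 (-exp 2)) := by
  have hslope : Tendsto (fun l => (exp l - 1) / l) (𝓝[>] 0) (𝓝 1) := by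
    have h := hasDerivAt_iff_tendsto_slope.mp (hasDerivAt_exp 0)
    rw [exp_zero] at h
    refine (h.mono_left (nhdsWithin_mono _ fun _ hl => ne_of_gt hl)).congr fun l => ?_
    simp [slope_def_field]
  have hlin : Tendsto (fun l : ℝ => (l - 1) * exp 2) (𝓝[>] 0) (𝓝 ((0 - 1) * exp 2)) :=
    (((continuous_id.sub continuous_const).mul continuous_const).tendsto 0).mono_left
      nhdsWithin_le_nhds
  have hlog := (continuousAt_log one_ne_zero).tendsto.comp hslope
  simpa [Function.comp_def, ← bonH_eq] using hlin.sub hlog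

lemma tendsto_bonH_atTop : Tendsto bonH atTop atTop := by
  have hlower : ∀ᶠ l in atTop, (exp 2 - 1) * l - exp 2 ≤ bonH l := by
    filter_upwards [eventually_ge_atTop 1] with l hl
    have hl0 : 0 < l := one_pos.trans_le hl
    have hlog : log (exp l - 1) ≤ l := by
      calc log (exp l - 1) ≤ log (exp l) :=
            log_le_log (sub_pos.2 (one_lt_exp_iff.2 hl0)) (by linarith)
        _ = l := log_exp l
    rw [bonH_eq_of_pos hl0]
    linarith [log_nonneg hl]
  refine tendsto_atTop_mono' _ hlower ?_
  exact tendsto_atTop_add_const_right _ _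
    (tendsto_id.const_mul_atTop (sub_pos.2 (one_lt_exp_iff.2 two_pos)))

lemma surjOn_bonH : SurjOn bonH (Ioi 0) (Ioi (-exp 2)) := by
  intro r hr
  obtain ⟨a, har, ha⟩ :=
    ((tendsto_bonH_nhdsGT_zero.eventually_lt_const hr).and self_mem_nhdsWithin).exists
  obtain ⟨b, hrb, hb⟩ :=
    ((tendsto_bonH_atTop.eventually_gt_atTop r).and (eventually_gt_atTop 0)).exists
  exact continuousOn_bonH.surjOn_Icc ha hb ⟨har.le, hrb.le⟩

lemma strictMonoOn_log_sub_sub_one_div : StrictMonoOn (fun N => log N - (N - 1) / N) (Ici 1) := by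
  have hderiv : ∀ x : ℝ, 0 < x →
      HasDerivAt (fun N => log N - (N - 1) / N) (x⁻¹ - (1 * x - (x - 1) * 1) / x ^ 2) x :=
    fun x hx => (hasDerivAt_log hx.ne').sub
      (((hasDerivAt_id x).sub_const 1).div (hasDerivAt_id x) hx.ne')
  refine strictMonoOn_of_deriv_pos (convex_Ici 1)
    (fun x hx => (hderiv x (one_pos.trans_le hx)).continuousAt.continuousWithinAt)
    fun x hx => ?_
  rw [interior_Ici] at hx
  have hx : 1 < x := hx
  rw [(hderiv x (one_pos.trans hx)).deriv]
  have hsimp : x⁻¹ - (1 * x - (x - 1) * 1) / x ^ 2 = (x - 1) / x ^ 2 := by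
    field_simp
    ring
  rw [hsimp]
  exact div_pos (sub_pos.2 hx) (by positivity)

lemma log_sub_sub_one_div_nonneg {N : ℝ} (hN : 1 ≤ N) : 0 ≤ log N - (N - 1) / N := by
  have h := strictMonoOn_log_sub_sub_one_div.monotoneOn self_mem_Ici hN hN
  simpa using h

/-- **Existence, uniqueness and monotonicity of the BoN variational coefficient `λ_N`.**
For every real `N ≥ 1` there is a unique `λ_N > 0` with
`h(λ_N) = log N − (N − 1)/N`, and the map `N ↦ λ_N` is strictly increasing on `[1, ∞)`:
whenever `1 ≤ N < M` and `λ_N, λ_M > 0` are the corresponding solutions, `λ_N < λ_M`. -/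
theorem stmt_13 :
    (∀ N : ℝ, 1 ≤ N →
      ∃! l : ℝ, 0 < l ∧ bonH l = Real.log N - (N - 1) / N) ∧
    (∀ N M lN lM : ℝ, 1 ≤ N → N < M → 0 < lN → 0 < lM →
      bonH lN = Real.log N - (N - 1) / N →
      bonH lM = Real.log M - (M - 1) / M →
      lN < lM) := by
  refine ⟨fun N hN => ?_, fun N M lN lM hN hNM hlN hlM hN_eq hM_eq => ?_⟩
  · have hr : log N - (N - 1) / N ∈ Ioi (-exp 2) :=
      (neg_neg_of_pos (exp_pos 2)).trans_le (log_sub_sub_one_div_nonneg hN)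
    obtain ⟨l, hl, hl_eq⟩ := surjOn_bonH hr
    exact ⟨l, ⟨hl, hl_eq⟩, fun l' ⟨hl', hl'_eq⟩ =>
      strictMonoOn_bonH.injOn hl' hl (hl'_eq.trans hl_eq.symm)⟩
  · have hrhs : bonH lN < bonH lM := by
      rw [hN_eq, hM_eq]
      exact strictMonoOn_log_sub_sub_one_div hN (hN.trans hNM.le) hNM
    exact (strictMonoOn_bonH.lt_iff_lt hlN hlM).1 hrhs
end

section
/- (STaR decomposition of the BoN-RL policy gradient) With Y a finite type, a differentiable parameterized family θ ↦ π_θ of positive pmfs on Y, a kernel w : Y × Y → ℝ, λ > 0, and a reward R : Y → ℝ, define Q_θ(y) = ∑_{y'} π_θ(y')·w(y,y'), Z_θ = ∑_y π_θ(y)·exp(λ·Q_θ(y)), and π_bon,θ(y) = π_θ(y)·exp(λ·Q_θ(y))/Z_θ. Then the policy gradient decomposes as ∇_θ [∑_y π_bon,θ(y)·R(y)] = ∑_y π_bon,θ(y)·∇_θ log π_θ(y)·R(y) + ∑_y π_bon,θ(y)·(λ·∇_θ Q_θ(y) − ∇_θ log Z_θ)·R(y), where the first term is the reward-weighted (STaR-style)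 gradient over BoN samples and the second accounts for the gradient of the importance weight exp(λ·Q_θ)/Z_θ between π_θ and π_bon,θ. -/
/-! The Best-of-N density `π θ y * exp (λ * Q θ y) / Z θ` has logarithmic derivative
`∇ log π θ y + λ ∇ Q θ y - ∇ log Z θ`, so each summand of the objective differentiates to
`πbon θ y * R y` times this score; splitting the score gives the two terms. -/

section MulExpDiv

open Real ContinuousLinearMap

variable {E : Type*} [NormedAddCommGroup E] [NormedSpace ℝ E] {p q z : E → ℝ} {x : E}

theorem hasFDerivAt_mul_exp_div (hp : DifferentiableAt ℝ p x) (hq : DifferentiableAt ℝ q x)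
    (hz : DifferentiableAt ℝ z x) (hpx : p x ≠ 0) (hzx : z x ≠ 0) :
    HasFDerivAt (fun t => p t * exp (q t) / z t)
      ((p x * exp (q x) / z x) •
        (fderiv ℝ (fun t => log (p t)) x + fderiv ℝ q x - fderiv ℝ (fun t => log (z t)) x)) x := by
  rw [(hp.hasFDerivAt.log hpx).fderiv, (hz.hasFDerivAt.log hzx).fderiv]
  have hinv := (hasDerivAt_inv hzx).comp_hasFDerivAt x hz.hasFDerivAt
  simp only [div_eq_mul_inv]
  refine ((hp.hasFDerivAt.fun_mul hq.hasFDerivAt.exp).fun_mul hinv).congr_fderiv ?_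
  ext v
  simp only [neg_smul, smul_neg, Function.comp_apply, smul_add, add_apply, neg_apply, smul_apply,
    smul_eq_mul, sub_apply]
  field_simp
  ring

end MulExpDiv

theorem stmt_15_general {Y : Type*} [Fintype Y] {d : ℕ}
    (π : (Fin d → ℝ) → Y → ℝ)
    (hpos : ∀ θ y, 0 < π θ y)
    (hdiff : ∀ y, Differentiable ℝ (fun θ => π θ y))
    (w : Y → Y → ℝ) (lam : ℝ)
    (R : Y → ℝ)
    (Q : (Fin d → ℝ) → Y → ℝ)
    (hQ : ∀ θ y, Q θ y = ∑ y', π θ y' * w y y')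
    (Z : (Fin d → ℝ) → ℝ)
    (hZ : ∀ θ, Z θ = ∑ y, π θ y * Real.exp (lam * Q θ y))
    (πbon : (Fin d → ℝ) → Y → ℝ)
    (hbon : ∀ θ y, πbon θ y = π θ y * Real.exp (lam * Q θ y) / Z θ)
    (θ : Fin d → ℝ) :
    fderiv ℝ (fun t => ∑ y, πbon t y * R y) θ
      = ∑ y, (πbon θ y * R y) • fderiv ℝ (fun t => Real.log (π t y)) θ
        + ∑ y, (πbon θ y * R y) •
            (lam • fderiv ℝ (fun t => Q t y) θ
              - fderiv ℝ (fun t => Real.log (Z t)) θ) := by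
  have hQd (y : Y) : Differentiable ℝ (fun t => Q t y) := by
    simp_rw [hQ]
    fun_prop
  have hZd : Differentiable ℝ Z := by
    rw [funext hZ]
    exact Differentiable.fun_sum fun y _ => (hdiff y).mul ((hQd y).const_mul lam).exp
  have hZpos (y : Y) : 0 < Z θ := by
    rw [hZ]
    exact Finset.sum_pos (fun y _ => mul_pos (hpos θ y) (Real.exp_pos _)) ⟨y, Finset.mem_univ y⟩
  have hbon_deriv (y : Y) : HasFDerivAt (fun t => πbon t y)
      (πbon θ y • (fderiv ℝ (fun t => Real.log (π t y)) θ + lam • fderiv ℝ (fun t => Q t y) θ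
        - fderiv ℝ (fun t => Real.log (Z t)) θ)) θ := by
    have h := hasFDerivAt_mul_exp_div (hdiff y θ) ((hQd y).const_mul lam θ) (hZd θ)
      (hpos θ y).ne' (hZpos y).ne'
    rwa [fderiv_const_mul (hQd y θ), ← hbon, ← funext (hbon · y)] at h
  rw [(HasFDerivAt.fun_sum fun y _ => (hbon_deriv y).mul_const (R y)).fderiv,
    ← Finset.sum_add_distrib]
  refine Finset.sum_congr rfl fun y _ => ?_
  rw [smul_smul, ← smul_add, add_sub_assoc, mul_comm]

/-- **STaR decomposition of the BoN-RL policy gradient.**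
With a differentiable parameterized family `θ ↦ π θ` of positive pmfs on a finite type `Y`,
kernel `w`, `λ > 0`, reward `R`, `Q θ y = ∑ y', π θ y' * w y y'`,
`Z θ = ∑ y, π θ y * exp (λ * Q θ y)`, and `π_bon θ y = π θ y * exp (λ * Q θ y) / Z θ`,
the policy gradient decomposes as
`∇ ∑ y, π_bon θ y * R y
  = ∑ y, (π_bon θ y * R y) • ∇ log π θ y
    + ∑ y, (π_bon θ y * R y) • (λ • ∇ Q θ y − ∇ log Z θ)`,
where the first term is the reward-weighted (STaR-style) gradient over BoN samples and the
second accounts for the gradient of the importance weight `exp(λ·Q θ)/Z θ`. -/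
theorem stmt_15 {Y : Type*} [Fintype Y] {d : ℕ}
    (π : (Fin d → ℝ) → Y → ℝ)
    (hpos : ∀ θ y, 0 < π θ y) (hsum : ∀ θ, ∑ y, π θ y = 1)
    (hdiff : ∀ y, Differentiable ℝ (fun θ => π θ y))
    (w : Y → Y → ℝ) (lam : ℝ) (hlam : 0 < lam)
    (R : Y → ℝ)
    (Q : (Fin d → ℝ) → Y → ℝ)
    (hQ : ∀ θ y, Q θ y = ∑ y', π θ y' * w y y')
    (Z : (Fin d → ℝ) → ℝ)
    (hZ : ∀ θ, Z θ = ∑ y, π θ y * Real.exp (lam * Q θ y))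
    (πbon : (Fin d → ℝ) → Y → ℝ)
    (hbon : ∀ θ y, πbon θ y = π θ y * Real.exp (lam * Q θ y) / Z θ)
    (θ : Fin d → ℝ) :
    fderiv ℝ (fun t => ∑ y, πbon t y * R y) θ
      = ∑ y, (πbon θ y * R y) • fderiv ℝ (fun t => Real.log (π t y)) θ
        + ∑ y, (πbon θ y * R y) •
            (lam • fderiv ℝ (fun t => Q t y) θ
              - fderiv ℝ (fun t => Real.log (Z t)) θ) :=
  stmt_15_general π hpos hdiff w lam R Q hQ Z hZ πbon hbon θ
end

section
/- (Sufficiency of the KL-regularized consistency condition) Let Y be a finite type, π_β a positive pmf on Y, β > 0, and R : Y → ℝ. Suppose there exist a real number V and a positive pmf π on Y such that V = R(y) + β·log π_β(y) − β·log π(y) for every y ∈ Y. Then π(y) = π_β(y)·exp(R(y)/β) / (∑_{y'} π_β(y')·exp(R(y')/β)) for all y, V = β·log ∑_{y'} π_β(y')·exp(R(y')/β), and π is the unique maximizer over pmfs μ on Y of the KL-regularized objective ∑_y μ(y)·R(y) − β·KL(μ‖π_β). -/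
/-!
The consistency condition says `log π = log π_β + (R - V) / β`, i.e. `π` is the Gibbs tilt
`π_β · exp (R / β)` normalised by `exp (V / β)`; summing over `Y` identifies the normaliser and
hence `V`. Substituting `R` from the condition turns the objective at any pmf `μ` into
`V - β · KL(μ‖π)`, so Gibbs' inequality `KL(μ‖π) ≥ 0`, with equality only at `μ = π`, gives the
unique maximiser.
-/

open Finset InformationTheory

noncomputable def discreteKL {Y : Type*} [Fintype Y] (μ ν : Y → ℝ) : ℝ :=
  ∑ y, μ y * Real.log (μ y / ν y)

noncomputable def klRegularizedObjective {Y : Type*} [Fintype Y]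
    (R : Y → ℝ) (β : ℝ) (πβ μ : Y → ℝ) : ℝ :=
  ∑ y, μ y * R y - β * discreteKL μ πβ

lemma mul_log_div_eq_mul_klFun {x p : ℝ} (hp : p ≠ 0) :
    x * Real.log (x / p) = p * klFun (x / p) + x - p := by
  rw [klFun_apply]
  field_simp
  ring

section Gibbs

variable {Y : Type*} [Fintype Y] {μ ν : Y → ℝ}

lemma discreteKL_eq_sum_mul_klFun (hν : ∀ y, 0 < ν y) (hsum : ∑ y, μ y = ∑ y, ν y) :
    discreteKL μ ν = ∑ y, ν y * klFun (μ y / ν y) := by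
  simp only [discreteKL, fun y => mul_log_div_eq_mul_klFun (x := μ y) (hν y).ne',
    sum_sub_distrib, sum_add_distrib, hsum, add_sub_cancel_right]

lemma discreteKL_nonneg (hμ : ∀ y, 0 ≤ μ y) (hν : ∀ y, 0 < ν y)
    (hsum : ∑ y, μ y = ∑ y, ν y) : 0 ≤ discreteKL μ ν := by
  rw [discreteKL_eq_sum_mul_klFun hν hsum]
  exact sum_nonneg fun y _ =>
    mul_nonneg (hν y).le (klFun_nonneg (div_nonneg (hμ y) (hν y).le))

lemma eq_of_discreteKL_eq_zero (hμ : ∀ y, 0 ≤ μ y) (hν : ∀ y, 0 < ν y)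
    (hsum : ∑ y, μ y = ∑ y, ν y) (hKL : discreteKL μ ν = 0) : μ = ν := by
  rw [discreteKL_eq_sum_mul_klFun hν hsum, sum_eq_zero_iff_of_nonneg fun y _ =>
    mul_nonneg (hν y).le (klFun_nonneg (div_nonneg (hμ y) (hν y).le))] at hKL
  funext y
  have hklFun : klFun (μ y / ν y) = 0 :=
    (mul_eq_zero.mp (hKL y (mem_univ y))).resolve_left (hν y).ne'
  rw [klFun_eq_zero_iff (div_nonneg (hμ y) (hν y).le), div_eq_one_iff_eq (hν y).ne'] at hklFun
  exact hklFun

lemma discreteKL_self (ν : Y → ℝ) (hν : ∀ y, ν y ≠ 0) : discreteKL ν ν = 0 := by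
  simp [discreteKL, div_self (hν _)]

end Gibbs

section Consistency

variable {Y : Type*} {πβ π R : Y → ℝ} {β V : ℝ}

lemma eq_mul_exp_div_exp_of_consistency (hπβ : ∀ y, 0 < πβ y) (hπ : ∀ y, 0 < π y)
    (hβ : β ≠ 0) (hcons : ∀ y, V = R y + β * Real.log (πβ y) - β * Real.log (π y)) (y : Y) :
    π y = πβ y * Real.exp (R y / β) / Real.exp (V / β) := by
  have hlog : Real.log (π y) = Real.log (πβ y) + R y / β - V / β := by
    field_simp
    linarith [hcons y]
  rw [← Real.exp_log (hπ y), hlog, Real.exp_sub, Real.exp_add, Real.exp_log (hπβ y)]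

lemma sum_mul_exp_eq_exp_of_consistency [Fintype Y] (hπβ : ∀ y, 0 < πβ y) (hπ : ∀ y, 0 < π y)
    (hπsum : ∑ y, π y = 1) (hβ : β ≠ 0)
    (hcons : ∀ y, V = R y + β * Real.log (πβ y) - β * Real.log (π y)) :
    ∑ y, πβ y * Real.exp (R y / β) = Real.exp (V / β) := by
  simp only [eq_mul_exp_div_exp_of_consistency hπβ hπ hβ hcons, ← sum_div,
    div_eq_one_iff_eq (Real.exp_pos _).ne'] at hπsum
  exact hπsum

lemma klRegularizedObjective_eq_sub_discreteKL [Fintype Y]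
    (hπβ : ∀ y, 0 < πβ y) (hπ : ∀ y, 0 < π y)
    (hcons : ∀ y, V = R y + β * Real.log (πβ y) - β * Real.log (π y))
    {μ : Y → ℝ} (hμsum : ∑ y, μ y = 1) :
    klRegularizedObjective R β πβ μ = V - β * discreteKL μ π := by
  have hterm : ∀ y, μ y * R y - β * (μ y * Real.log (μ y / πβ y))
      = μ y * V - β * (μ y * Real.log (μ y / π y)) := by
    intro y
    rcases eq_or_ne (μ y) 0 with h0 | h0
    · simp [h0]
    · rw [hcons y, Real.log_div h0 (hπβ y).ne', Real.log_div h0 (hπ y).ne']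
      ring
  calc klRegularizedObjective R β πβ μ
      = ∑ y, (μ y * R y - β * (μ y * Real.log (μ y / πβ y))) := by
        rw [klRegularizedObjective, discreteKL, sum_sub_distrib, mul_sum]
    _ = ∑ y, (μ y * V - β * (μ y * Real.log (μ y / π y))) := sum_congr rfl fun y _ => hterm y
    _ = V - β * discreteKL μ π := by
        rw [sum_sub_distrib, ← sum_mul, hμsum, one_mul, discreteKL, mul_sum]

end Consistency

theorem stmt_16_general {Y : Type*} [Fintype Y]
    (πβ : Y → ℝ) (hβpos : ∀ y, 0 < πβ y)
    (β : ℝ) (hβ : 0 < β) (R : Y → ℝ)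
    (V : ℝ) (π : Y → ℝ) (hπpos : ∀ y, 0 < π y) (hπsum : ∑ y, π y = 1)
    (hconsistency : ∀ y, V = R y + β * Real.log (πβ y) - β * Real.log (π y)) :
    (∀ y, π y = πβ y * Real.exp (R y / β) / ∑ y', πβ y' * Real.exp (R y' / β)) ∧
    (V = β * Real.log (∑ y', πβ y' * Real.exp (R y' / β))) ∧
    (∀ μ : Y → ℝ, (∀ y, 0 ≤ μ y) → (∑ y, μ y = 1) →
      ((∑ y, μ y * R y) - β * (∑ y, μ y * Real.log (μ y / πβ y))
          ≤ (∑ y, π y * R y) - β * (∑ y, π y * Real.log (π y / πβ y))) ∧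
      (((∑ y, μ y * R y) - β * (∑ y, μ y * Real.log (μ y / πβ y))
          = (∑ y, π y * R y) - β * (∑ y, π y * Real.log (π y / πβ y))) → μ = π)) := by
  have hZ := sum_mul_exp_eq_exp_of_consistency hβpos hπpos hπsum hβ.ne' hconsistency
  have hobj {μ : Y → ℝ} (hμsum : ∑ y, μ y = 1) :=
    klRegularizedObjective_eq_sub_discreteKL hβpos hπpos hconsistency hμsum
  have hπobj : klRegularizedObjective R β πβ π = V := by
    rw [hobj hπsum, discreteKL_self π fun y => (hπpos y).ne', mul_zero, sub_zero]
  refine ⟨fun y => hZ ▸ eq_mul_exp_div_exp_of_consistency hβpos hπpos hβ.ne' hconsistency y,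
    by rw [hZ, Real.log_exp, mul_div_cancel₀ V hβ.ne'], fun μ hμ hμsum => ?_⟩
  have hsum : ∑ y, μ y = ∑ y, π y := hμsum.trans hπsum.symm
  change klRegularizedObjective R β πβ μ ≤ klRegularizedObjective R β πβ π ∧
    (klRegularizedObjective R β πβ μ = klRegularizedObjective R β πβ π → μ = π)
  rw [hobj hμsum, hπobj]
  refine ⟨sub_le_self V (mul_nonneg hβ.le (discreteKL_nonneg hμ hπpos hsum)), fun hV => ?_⟩
  exact eq_of_discreteKL_eq_zero hμ hπpos hsum (by simpa [hβ.ne'] using hV)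

/-- **Sufficiency of the KL-regularized consistency condition.**
Let `Y` be finite, `π_β` a positive pmf, `β > 0`, `R : Y → ℝ`.  If there exist `V : ℝ` and a
positive pmf `π` with `V = R y + β·log π_β y − β·log π y` for every `y`, then
`π y = π_β y · exp(R y / β) / ∑ y', π_β y' · exp(R y' / β)`,
`V = β · log ∑ y', π_β y' · exp(R y' / β)`, and `π` is the unique maximizer over pmfs `μ` of
`∑ y, μ y · R y − β · KL(μ‖π_β)`. -/
theorem stmt_16 {Y : Type*} [Fintype Y]
    (πβ : Y → ℝ) (hβpos : ∀ y, 0 < πβ y) (hβsum : ∑ y, πβ y = 1)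
    (β : ℝ) (hβ : 0 < β) (R : Y → ℝ)
    (V : ℝ) (π : Y → ℝ) (hπpos : ∀ y, 0 < π y) (hπsum : ∑ y, π y = 1)
    (hconsistency : ∀ y, V = R y + β * Real.log (πβ y) - β * Real.log (π y)) :
    (∀ y, π y = πβ y * Real.exp (R y / β) / ∑ y', πβ y' * Real.exp (R y' / β)) ∧
    (V = β * Real.log (∑ y', πβ y' * Real.exp (R y' / β))) ∧
    (∀ μ : Y → ℝ, (∀ y, 0 ≤ μ y) → (∑ y, μ y = 1) →
      ((∑ y, μ y * R y) - β * (∑ y, μ y * Real.log (μ y / πβ y))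
          ≤ (∑ y, π y * R y) - β * (∑ y, π y * Real.log (π y / πβ y))) ∧
      (((∑ y, μ y * R y) - β * (∑ y, μ y * Real.log (μ y / πβ y))
          = (∑ y, π y * R y) - β * (∑ y, π y * Real.log (π y / πβ y))) → μ = π)) :=
  stmt_16_general πβ hβpos β hβ R V π hπpos hπsum hconsistency
end
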